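/- arXiv:1804.07366 — 9 statements merged into one kernel-verified Lean document; each statement's English description precedes it below -/
import Mathlib

section
/- Let G act translatively on a poset P and suppose P/G is a poset. Then for every p ∈ P, the restriction of the quotient map to the principal lower interval P_{≤p} is an isomorphism of posets onto (P/G)_{≤Gp}. -/
/-- Two points below `p` in the same orbit share the upper bound `p`, so translativity makes the
translation fix them: a lower interval meets each orbit at most once, and order between orbits is
order between the representatives. -/
theorem smul_eq_self_of_le_of_smul_le {G P : Type*} [SMul G P] [LE P]
    (htrans : ∀ (p : P) (g : G), (∃ u : P, p ≤ u ∧ g • p ≤ u) → g • p = p)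
    {g : G} {x p : P} (hx : x ≤ p) (hgx : g • x ≤ p) : g • x = x :=
  htrans x g ⟨p, hx, hgx⟩

theorem translative_quotient_lower_interval_iso_general
    {G P : Type*} [Group G] [PartialOrder P] [MulAction G P]
    (htrans : ∀ (p : P) (g : G), (∃ u : P, p ≤ u ∧ g • p ≤ u) → g • p = p)
    (p : P) :
    (∀ x ∈ Set.Iic p, ∀ y ∈ Set.Iic p, (∃ g : G, g • x = y) → x = y) ∧
    (∀ z : P, (∃ g : G, g • z ≤ p) → ∃ x ∈ Set.Iic p, ∃ g : G, g • z = x) ∧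
    (∀ x ∈ Set.Iic p, ∀ y ∈ Set.Iic p, (∃ g : G, g • x ≤ y) → x ≤ y) := by
  refine ⟨?_, ?_, ?_⟩
  · rintro x hx y hy ⟨g, rfl⟩
    exact (smul_eq_self_of_le_of_smul_le htrans hx hy).symm
  · rintro z ⟨g, hgz⟩
    exact ⟨g • z, hgz, g, rfl⟩
  · rintro x hx y hy ⟨g, hgxy⟩
    rwa [smul_eq_self_of_le_of_smul_le htrans hx (hgxy.trans hy)] at hgxy

/-- Let `G` act translatively on a poset `P` and suppose `P/G` is a poset.
Then for every `p ∈ P` the restriction of the quotient map to `P_{≤p}` is an isomorphism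
of posets onto `(P/G)_{≤Gp}`: it is injective on orbits, every orbit below `Gp` has a
(unique) representative below `p`, and it reflects the order. -/
theorem translative_quotient_lower_interval_iso
    {G P : Type*} [Group G] [PartialOrder P] [MulAction G P]
    (hact : ∀ (g : G) (x y : P), x ≤ y ↔ g • x ≤ g • y)
    (htrans : ∀ (p : P) (g : G), (∃ u : P, p ≤ u ∧ g • p ≤ u) → g • p = p)
    (hposet : ∀ p q : P, (∃ g : G, g • p ≤ q) → (∃ g : G, g • q ≤ p) → ∃ g : G, g • p = q)
    (p : P) :
    (∀ x ∈ Set.Iic p, ∀ y ∈ Set.Iic p, (∃ g : G, g • x = y) → x = y) ∧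
    (∀ z : P, (∃ g : G, g • z ≤ p) → ∃ x ∈ Set.Iic p, ∃ g : G, g • z = x) ∧
    (∀ x ∈ Set.Iic p, ∀ y ∈ Set.Iic p, (∃ g : G, g • x ≤ y) → x ≤ y) :=
  translative_quotient_lower_interval_iso_general htrans p
end

section
/- Let G act translatively on a poset P with P/G a poset, and let f: P → P/G be the quotient map. Then for every X ∈ P/G, the preimage f^{-1}((P/G)_{≥X}) is the disjoint union over x ∈ f^{-1}(X) of the upper sets P_{≥x}. -/
namespace MulAction

theorem setOf_exists_smul_le_eq_biUnion_orbit_Ici {G P : Type*} [Monoid G] [Preorder P]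
    [MulAction G P] (p : P) :
    {z : P | ∃ g : G, g • p ≤ z} = ⋃ x ∈ orbit G p, Set.Ici x := by
  ext z
  simp only [Set.mem_ofPred_eq, Set.mem_iUnion, Set.mem_Ici, exists_prop, mem_orbit_iff,
    exists_exists_eq_and]

def IsTranslative (G P : Type*) [SMul G P] [LE P] : Prop :=
  ∀ (p : P) (g : G), (∃ u : P, p ≤ u ∧ g • p ≤ u) → g • p = p

theorem IsTranslative.eq_of_mem_orbit_of_le_of_le {G P : Type*} [Monoid G] [LE P]
    [MulAction G P] (htrans : IsTranslative G P) {x y u : P}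
    (hxy : x ∈ orbit G y) (hx : x ≤ u) (hy : y ≤ u) : x = y := by
  obtain ⟨g, rfl⟩ := hxy
  exact htrans y g ⟨u, hy, hx⟩

theorem IsTranslative.pairwiseDisjoint_Ici_orbit {G P : Type*} [Group G] [Preorder P]
    [MulAction G P] (htrans : IsTranslative G P) (p : P) :
    (orbit G p).PairwiseDisjoint Set.Ici := by
  intro x hx y hy hne
  refine Set.disjoint_left.2 fun u hxu hyu => hne ?_
  have hxy : x ∈ orbit G y := (orbit_eq_iff.2 hy) ▸ hx
  exact htrans.eq_of_mem_orbit_of_le_of_le hxy hxu hyu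

end MulAction

theorem translative_quotient_upper_fiber_decomposition_general
    {G P : Type*} [Group G] [PartialOrder P] [MulAction G P]
    (htrans : ∀ (p : P) (g : G), (∃ u : P, p ≤ u ∧ g • p ≤ u) → g • p = p)
    (p : P) :
    ({z : P | ∃ g : G, g • p ≤ z} = ⋃ x ∈ MulAction.orbit G p, Set.Ici x) ∧
    (MulAction.orbit G p).PairwiseDisjoint (fun x => Set.Ici x) :=
  ⟨MulAction.setOf_exists_smul_le_eq_biUnion_orbit_Ici p,
    MulAction.IsTranslative.pairwiseDisjoint_Ici_orbit (G := G) htrans p⟩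

/-- Let `G` act translatively on a poset `P` with `P/G` a poset, and let
`f : P → P/G` be the quotient map. For every orbit `X = Gp`, the preimage
`f⁻¹((P/G)_{≥X}) = {z | ∃ g, g • p ≤ z}` is the disjoint union of the upper sets `P_{≥x}`
over the representatives `x ∈ X`. -/
theorem translative_quotient_upper_fiber_decomposition
    {G P : Type*} [Group G] [PartialOrder P] [MulAction G P]
    (hact : ∀ (g : G) (x y : P), x ≤ y ↔ g • x ≤ g • y)
    (htrans : ∀ (p : P) (g : G), (∃ u : P, p ≤ u ∧ g • p ≤ u) → g • p = p)
    (hposet : ∀ p q : P, (∃ g : G, g • p ≤ q) → (∃ g : G, g • q ≤ p) → ∃ g : G, g • p = q)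
    (p : P) :
    ({z : P | ∃ g : G, g • p ≤ z} = ⋃ x ∈ MulAction.orbit G p, Set.Ici x) ∧
    (MulAction.orbit G p).PairwiseDisjoint (fun x => Set.Ici x) :=
  translative_quotient_upper_fiber_decomposition_general htrans p
end

section
/- Let G act translatively on a poset P with P/G a poset. For every x ∈ P there is an isomorphism of posets (P/G)_{≥Gx} ≅ P_{≥x} / stab(x), and the induced action of stab(x) on P_{≥x} is translative. -/
/-! If `x ≤ y`, `x ≤ z` and `g • y ≤ z`, then `z` bounds both `x` and `g • x ≤ g • y`, so `g` already
lies in `stab(x)`: any element of `G` relating two points of `P_{≥x}` can be taken from `stab(x)`.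
Surjectivity onto `(P/G)_{≥Gx}` is the translate `g⁻¹ • z ≥ x` of any `z ≥ g • x`. -/

section Translative

variable {G P : Type*} [Group G] [Preorder P] [MulAction G P]

theorem mem_stabilizer_of_smul_le_of_le
    (hmono : ∀ (g : G) (x y : P), x ≤ y → g • x ≤ g • y)
    (htrans : ∀ (p : P) (g : G), (∃ u : P, p ≤ u ∧ g • p ≤ u) → g • p = p)
    {g : G} {x y z : P} (hxy : x ≤ y) (hxz : x ≤ z) (hg : g • y ≤ z) :
    g ∈ MulAction.stabilizer G x :=
  htrans x g ⟨z, hxz, (hmono g x y hxy).trans hg⟩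

theorem le_inv_smul_of_smul_le (hact : ∀ (g : G) (x y : P), x ≤ y ↔ g • x ≤ g • y)
    {g : G} {x z : P} (h : g • x ≤ z) : x ≤ g⁻¹ • z :=
  (hact g x _).mpr (by rwa [smul_inv_smul])

end Translative

theorem translative_quotient_upper_interval_iso_general
    {G P : Type*} [Group G] [PartialOrder P] [MulAction G P]
    (hact : ∀ (g : G) (x y : P), x ≤ y ↔ g • x ≤ g • y)
    (htrans : ∀ (p : P) (g : G), (∃ u : P, p ≤ u ∧ g • p ≤ u) → g • p = p)
    (x : P) :
    (∀ g ∈ MulAction.stabilizer G x, ∀ y : P, x ≤ y →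
        (∃ u : P, y ≤ u ∧ g • y ≤ u) → g • y = y) ∧
    (∀ y z : P, x ≤ y → x ≤ z → (∃ g : G, g • y = z) →
        ∃ h ∈ MulAction.stabilizer G x, h • y = z) ∧
    (∀ z : P, (∃ g : G, g • x ≤ z) → ∃ y : P, x ≤ y ∧ ∃ g : G, g • y = z) ∧
    (∀ y z : P, x ≤ y → x ≤ z → (∃ g : G, g • y ≤ z) →
        ∃ h ∈ MulAction.stabilizer G x, h • y ≤ z) := by
  have hmono : ∀ (g : G) (x y : P), x ≤ y → g • x ≤ g • y := fun g x y => (hact g x y).mp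
  refine ⟨fun g _ y _ hbound => htrans y g hbound, ?_, ?_, ?_⟩
  · rintro y z hxy hxz ⟨g, rfl⟩
    exact ⟨g, mem_stabilizer_of_smul_le_of_le hmono htrans hxy hxz le_rfl, rfl⟩
  · rintro z ⟨g, hg⟩
    exact ⟨g⁻¹ • z, le_inv_smul_of_smul_le hact hg, g, smul_inv_smul g z⟩
  · rintro y z hxy hxz ⟨g, hg⟩
    exact ⟨g, mem_stabilizer_of_smul_le_of_le hmono htrans hxy hxz hg, hg⟩

/-- Let `G` act translatively on a poset `P` with `P/G` a poset. For every
`x ∈ P`, the induced action of `stab(x)` on `P_{≥x}` is translative, and the map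
`stab(x)·y ↦ G·y` is an isomorphism of posets `P_{≥x}/stab(x) ≅ (P/G)_{≥Gx}`:
it is injective on `stab(x)`-orbits, surjective onto orbits above `Gx`, and order-reflecting. -/
theorem translative_quotient_upper_interval_iso
    {G P : Type*} [Group G] [PartialOrder P] [MulAction G P]
    (hact : ∀ (g : G) (x y : P), x ≤ y ↔ g • x ≤ g • y)
    (htrans : ∀ (p : P) (g : G), (∃ u : P, p ≤ u ∧ g • p ≤ u) → g • p = p)
    (hposet : ∀ p q : P, (∃ g : G, g • p ≤ q) → (∃ g : G, g • q ≤ p) → ∃ g : G, g • p = q)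
    (x : P) :
    (∀ g ∈ MulAction.stabilizer G x, ∀ y : P, x ≤ y →
        (∃ u : P, y ≤ u ∧ g • y ≤ u) → g • y = y) ∧
    (∀ y z : P, x ≤ y → x ≤ z → (∃ g : G, g • y = z) →
        ∃ h ∈ MulAction.stabilizer G x, h • y = z) ∧
    (∀ z : P, (∃ g : G, g • x ≤ z) → ∃ y : P, x ≤ y ∧ ∃ g : G, g • y = z) ∧
    (∀ y z : P, x ≤ y → x ≤ z → (∃ g : G, g • y ≤ z) →
        ∃ h ∈ MulAction.stabilizer G x, h • y ≤ z) :=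
  translative_quotient_upper_interval_iso_general hact htrans x
end

section
/- Let G be a group acting translatively on a finite-length simplicial poset P (so that all chains in P have bounded length). If p₁ < p₂ < … < p_k and g₁p₁ < g₂p₂ < … < g_kp_k are two chains in P with g₁, …, g_k ∈ G, then there exists g ∈ G with gp_i = g_ip_i for all i = 1, …, k. -/
theorem smul_eq_smul_of_le_of_smul_le_smul {G P : Type*} [Group G] [LE P] [MulAction G P]
    (hreflect : ∀ (g : G) (x y : P), g • x ≤ g • y → x ≤ y)
    (htrans : ∀ (p : P) (g : G), (∃ u : P, p ≤ u ∧ g • p ≤ u) → g • p = p)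
    {p q : P} {a b : G} (hpq : p ≤ q) (h : a • p ≤ b • q) : b • p = a • p := by
  have hle : (b⁻¹ * a) • p ≤ q := hreflect b _ _ (by rwa [mul_smul, smul_inv_smul])
  have hfix : (b⁻¹ * a) • p = p := htrans p _ ⟨q, hpq, hle⟩
  calc b • p = b • (b⁻¹ * a) • p := by rw [hfix]
    _ = a • p := by rw [mul_smul, smul_inv_smul]

theorem translative_chain_regularity_general
    {G P : Type*} [Group G] [PartialOrder P] [MulAction G P]
    (hact : ∀ (g : G) (x y : P), x ≤ y ↔ g • x ≤ g • y)
    (htrans : ∀ (p : P) (g : G), (∃ u : P, p ≤ u ∧ g • p ≤ u) → g • p = p)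
    (k : ℕ) (p : Fin k → P) (g : Fin k → G)
    (hchain₁ : StrictMono p)
    (hchain₂ : StrictMono (fun i => g i • p i)) :
    ∃ g₀ : G, ∀ i : Fin k, g₀ • p i = g i • p i := by
  obtain _ | k := k
  · exact ⟨1, fun i => i.elim0⟩
  -- `p (last k)` bounds the first chain and its translate bounds the second.
  refine ⟨g (Fin.last k), fun i => ?_⟩
  exact smul_eq_smul_of_le_of_smul_le_smul (fun g x y => (hact g x y).2) htrans
    (hchain₁.monotone (Fin.le_last i)) (hchain₂.monotone (Fin.le_last i))

/-- Let `G` act translatively (by order automorphisms) on a finite-length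
simplicial poset `P`.  If `p₁ < ⋯ < p_k` and `g₁p₁ < ⋯ < g_kp_k` are two chains in `P`,
then there exists a single `g ∈ G` with `g • pᵢ = gᵢ • pᵢ` for all `i`. -/
theorem translative_chain_regularity
    {G P : Type*} [Group G] [PartialOrder P] [OrderBot P] [MulAction G P]
    (hact : ∀ (g : G) (x y : P), x ≤ y ↔ g • x ≤ g • y)
    (n : ℕ)
    (hlen : ∀ c : Finset P, IsChain (· ≤ ·) (c : Set P) → c.card ≤ n + 1)
    (hsimp : ∀ p : P, ∃ m : ℕ, Nonempty (Set.Iic p ≃o Finset (Fin m)))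
    (htrans : ∀ (p : P) (g : G), (∃ u : P, p ≤ u ∧ g • p ≤ u) → g • p = p)
    (k : ℕ) (p : Fin k → P) (g : Fin k → G)
    (hchain₁ : StrictMono p)
    (hchain₂ : StrictMono (fun i => g i • p i)) :
    ∃ g₀ : G, ∀ i : Fin k, g₀ • p i = g i • p i :=
  translative_chain_regularity_general hact htrans k p g hchain₁ hchain₂
end

section
/- Let P be a finite simplicial poset and 𝔞, 𝔟 two lower order ideals of P. Then in the ring S = k[x_p : p ∈ P]/(x_{0̂} − 1): (1) I_𝔞^P + I_𝔟^P = I_{𝔞∩𝔟}^P, and (2) I_𝔞^P ∩ I_𝔟^P = I_{𝔞∪𝔟}^P. Consequently the ideals I_𝔞^P form a distributive lattice under sum and intersection. -/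
open MvPolynomial

attribute [local instance] Classical.propDecidable

/-- Minimal common upper bounds of `p` and `q` inside a lower order ideal `a`. -/
def minUB {P : Type*} [PartialOrder P] (a : Set P) (p q : P) : Set P :=
  {z | z ∈ a ∧ p ≤ z ∧ q ≤ z ∧ ∀ z' ∈ a, p ≤ z' → q ≤ z' → z' ≤ z → z' = z}

/-- The generators of the face ideal `Ĩ_a^P` of a finite simplicial poset `P`:
the variables `x_p` for `p ∉ a` together with the straightening relations
`x_p x_q − x_{p∧q} ⬝ Σ_{z ∈ u_a(p,q)} x_z` for incomparable `p, q ∈ a`. -/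
noncomputable def faceGens (P : Type*) [Fintype P] [PartialOrder P] (kk : Type*) [Field kk]
    (m : P → P → P) (a : Set P) : Set (MvPolynomial P kk) :=
  {f | ∃ p : P, p ∉ a ∧ f = X p} ∪
    {f | ∃ p q : P, p ∈ a ∧ q ∈ a ∧ ¬p ≤ q ∧ ¬q ≤ p ∧
      f = X p * X q - X (m p q) * ∑ z : P, if z ∈ minUB a p q then X z else 0}

section Comb
variable {P : Type*} [Fintype P] [PartialOrder P] (kk : Type*) [Field kk]

lemma minUB_inter {a b : Set P} (hb : IsLowerSet b) (p q : P) :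
    minUB (a ∩ b) p q = minUB a p q ∩ b := by
  ext z
  constructor
  · rintro ⟨⟨hza, hzb⟩, hpz, hqz, hmin⟩
    exact ⟨⟨hza, hpz, hqz, fun z' hz' h1 h2 h3 =>
      hmin z' ⟨hz', hb h3 hzb⟩ h1 h2 h3⟩, hzb⟩
  · rintro ⟨⟨hza, hpz, hqz, hmin⟩, hzb⟩
    exact ⟨⟨hza, hzb⟩, hpz, hqz, fun z' hz' h1 h2 h3 => hmin z' hz'.1 h1 h2 h3⟩

lemma sum_ite_mem_span {G : Set (MvPolynomial P kk)} (c : P → Prop) [∀ z, Decidable (c z)]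
    (h : ∀ z, c z → (X z : MvPolynomial P kk) ∈ Ideal.span G) :
    (∑ z : P, if c z then (X z : MvPolynomial P kk) else 0) ∈ Ideal.span G := by
  refine Ideal.sum_mem _ fun z _ => ?_
  by_cases hz : c z
  · simpa [hz] using h z hz
  · simp [hz]

/-- Part (1) at the polynomial level. -/
lemma span_gens_sup (m : P → P → P) {a b : Set P} (ha : IsLowerSet a) (hb : IsLowerSet b) :
    Ideal.span (faceGens P kk m a) ⊔ Ideal.span (faceGens P kk m b)
      = Ideal.span (faceGens P kk m (a ∩ b)) := by
  have key : ∀ (a b : Set P), IsLowerSet a → IsLowerSet b →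
      Ideal.span (faceGens P kk m a) ≤ Ideal.span (faceGens P kk m (a ∩ b)) := by
    intro a b ha hb
    rw [Ideal.span_le]
    rintro f (⟨p, hp, rfl⟩ | ⟨p, q, hpa, hqa, hpq, hqp, rfl⟩)
    · exact Ideal.subset_span (Or.inl ⟨p, fun hc => hp hc.1, rfl⟩)
    · by_cases hpb : p ∈ b
      · by_cases hqb : q ∈ b
        · -- p, q ∈ a ∩ b
          have hsum : (∑ z : P, if z ∈ minUB a p q then (X z : MvPolynomial P kk) else 0)
              = (∑ z : P, if z ∈ minUB (a ∩ b) p q then (X z : MvPolynomial P kk) else 0)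
                + ∑ z : P, if z ∈ minUB a p q ∧ z ∉ b then (X z : MvPolynomial P kk) else 0 := by
            rw [← Finset.sum_add_distrib]
            refine Finset.sum_congr rfl fun z _ => ?_
            by_cases h1 : z ∈ minUB a p q
            · by_cases h2 : z ∈ b
              · simp [h1, h2, minUB_inter hb]
              · simp [h1, h2, minUB_inter hb]
            · have : z ∉ minUB (a ∩ b) p q := by
                rw [minUB_inter hb]; exact fun hc => h1 hc.1
              simp [h1, this]
          have heq : X p * X q - X (m p q) *
                ∑ z : P, (if z ∈ minUB a p q then (X z : MvPolynomial P kk) else 0)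
              = (X p * X q - X (m p q) *
                  ∑ z : P, (if z ∈ minUB (a ∩ b) p q then (X z : MvPolynomial P kk) else 0))
                - X (m p q) *
                  ∑ z : P, (if z ∈ minUB a p q ∧ z ∉ b then (X z : MvPolynomial P kk) else 0) := by
            rw [hsum]; ring
          rw [heq]
          refine sub_mem (Ideal.subset_span (Or.inr ⟨p, q, ⟨hpa, hpb⟩, ⟨hqa, hqb⟩, hpq, hqp, rfl⟩))
            (Ideal.mul_mem_left _ _ (sum_ite_mem_span kk _ fun z hz => ?_))
          exact Ideal.subset_span (Or.inl ⟨z, fun hc => hz.2 hc.2, rfl⟩)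
        · -- q ∉ b : every term is a variable generator
          refine sub_mem (Ideal.mul_mem_left _ _ (Ideal.subset_span
            (Or.inl ⟨q, fun hc => hqb hc.2, rfl⟩)))
            (Ideal.mul_mem_left _ _ (sum_ite_mem_span kk _ fun z hz => ?_))
          have : z ∉ b := fun hzb => hqb (hb hz.2.2.1 hzb)
          exact Ideal.subset_span (Or.inl ⟨z, fun hc => this hc.2, rfl⟩)
      · refine sub_mem ?_ (Ideal.mul_mem_left _ _ (sum_ite_mem_span kk _ fun z hz => ?_))
        · exact Ideal.mul_mem_right _ _ (Ideal.subset_span (Or.inl ⟨p, fun hc => hpb hc.2, rfl⟩))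
        · have : z ∉ b := fun hzb => hpb (hb hz.2.1 hzb)
          exact Ideal.subset_span (Or.inl ⟨z, fun hc => this hc.2, rfl⟩)
  apply le_antisymm
  · refine sup_le (key a b ha hb) ?_
    have := key b a hb ha
    rwa [Set.inter_comm] at this
  · rw [Ideal.span_le]
    rintro f (⟨p, hp, rfl⟩ | ⟨p, q, hpa, hqa, hpq, hqp, rfl⟩)
    · by_cases hpa : p ∈ a
      · have hpb : p ∉ b := fun hc => hp ⟨hpa, hc⟩
        exact Ideal.mem_sup_right (Ideal.subset_span (Or.inl ⟨p, hpb, rfl⟩))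
      · exact Ideal.mem_sup_left (Ideal.subset_span (Or.inl ⟨p, hpa, rfl⟩))
    · -- rel_{a∩b} = rel_a - X m * Σ_{z ∈ u_a \ b} X z
      have hsum : (∑ z : P, if z ∈ minUB a p q then (X z : MvPolynomial P kk) else 0)
          = (∑ z : P, if z ∈ minUB (a ∩ b) p q then (X z : MvPolynomial P kk) else 0)
            + ∑ z : P, if z ∈ minUB a p q ∧ z ∉ b then (X z : MvPolynomial P kk) else 0 := by
        rw [← Finset.sum_add_distrib]
        refine Finset.sum_congr rfl fun z _ => ?_
        by_cases h1 : z ∈ minUB a p q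
        · by_cases h2 : z ∈ b
          · simp [h1, h2, minUB_inter hb]
          · simp [h1, h2, minUB_inter hb]
        · have : z ∉ minUB (a ∩ b) p q := by
            rw [minUB_inter hb]; exact fun hc => h1 hc.1
          simp [h1, this]
      have heq : X p * X q - X (m p q) *
            ∑ z : P, (if z ∈ minUB (a ∩ b) p q then (X z : MvPolynomial P kk) else 0)
          = (X p * X q - X (m p q) *
              ∑ z : P, (if z ∈ minUB a p q then (X z : MvPolynomial P kk) else 0))
            + X (m p q) *
              ∑ z : P, (if z ∈ minUB a p q ∧ z ∉ b then (X z : MvPolynomial P kk) else 0) := by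
        rw [hsum]; ring
      rw [heq]
      refine add_mem (Ideal.mem_sup_left (Ideal.subset_span
          (Or.inr ⟨p, q, hpa.1, hqa.1, hpq, hqp, rfl⟩)))
        (Ideal.mul_mem_left _ _ (Ideal.mem_sup_right (sum_ite_mem_span kk _ fun z hz => ?_)))
      exact Ideal.subset_span (Or.inl ⟨z, hz.2, rfl⟩)

end Comb

section Rank
variable {P : Type*} [Fintype P] [PartialOrder P] [OrderBot P]
variable (hs : ∀ p : P, ∃ n : ℕ, Nonempty (Set.Iic p ≃o Finset (Fin n)))

noncomputable def rk (p : P) : ℕ := (hs p).choose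

noncomputable def ee (σ : P) : Set.Iic σ ≃o Finset (Fin (rk hs σ)) :=
  Classical.choice (hs σ).choose_spec

lemma card_Iic (p : P) : Nat.card (Set.Iic p) = 2 ^ rk hs p := by
  rw [Nat.card_congr (ee hs p).toEquiv]
  simp [Nat.card_eq_fintype_card, Fintype.card_finset]

lemma rk_lt_rk {p q : P} (h : p < q) : rk hs p < rk hs q := by
  have h1 : Nat.card (Set.Iic p) < Nat.card (Set.Iic q) := by
    rw [Nat.card_coe_set_eq, Nat.card_coe_set_eq]
    refine Set.ncard_lt_ncard ⟨fun x hx => le_trans hx h.le, fun hc => ?_⟩ (Set.toFinite _)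
    exact absurd (hc (le_refl q)) (by simpa using h.not_ge)
  rw [card_Iic hs, card_Iic hs] at h1
  exact (Nat.pow_lt_pow_iff_right (by norm_num)).1 h1

lemma rk_bot : rk hs (⊥ : P) = 0 := by
  have h1 := card_Iic hs (⊥ : P)
  rw [Set.Iic_bot, Nat.card_eq_fintype_card] at h1
  simp only [Set.card_singleton] at h1
  by_contra h
  have : 1 < 2 ^ rk hs (⊥ : P) := Nat.one_lt_two_pow_iff.2 h
  omega

noncomputable def eF (σ p : P) : Finset (Fin (rk hs σ)) :=
  if h : p ≤ σ then ee hs σ ⟨p, h⟩ else ∅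

lemma eF_le_iff {σ p q : P} (hp : p ≤ σ) (hq : q ≤ σ) :
    eF hs σ p ⊆ eF hs σ q ↔ p ≤ q := by
  rw [eF, eF, dif_pos hp, dif_pos hq, ← Finset.le_iff_subset, (ee hs σ).le_iff_le]
  exact Iff.rfl

lemma eF_inj {σ p q : P} (hp : p ≤ σ) (hq : q ≤ σ) (h : eF hs σ p = eF hs σ q) : p = q := by
  have h1 : p ≤ q := (eF_le_iff hs hp hq).1 (le_of_eq h)
  have h2 : q ≤ p := (eF_le_iff hs hq hp).1 (ge_of_eq h)
  exact le_antisymm h1 h2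

lemma eF_card {σ p : P} (hp : p ≤ σ) : (eF hs σ p).card = rk hs p := by
  set s : Finset (Fin (rk hs σ)) := eF hs σ p with hsdef
  have e1 : Set.Iic p ≃ Set.Iic (⟨p, hp⟩ : Set.Iic σ) :=
    { toFun := fun x => ⟨⟨x.1, x.2.trans hp⟩, x.2⟩
      invFun := fun y => ⟨y.1.1, y.2⟩
      left_inv := fun x => rfl
      right_inv := fun y => rfl }
  have e2 : Set.Iic (⟨p, hp⟩ : Set.Iic σ) ≃ Set.Iic s :=
    { toFun := fun y => ⟨ee hs σ y.1, by
        have : y.1 ≤ ⟨p, hp⟩ := y.2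
        have := (ee hs σ).le_iff_le.2 this
        simpa [hsdef, eF, dif_pos hp] using this⟩
      invFun := fun F => ⟨(ee hs σ).symm F.1, by
        have hF : F.1 ≤ ee hs σ ⟨p, hp⟩ := by
          have := F.2
          simpa [hsdef, eF, dif_pos hp] using this
        have := (ee hs σ).symm.le_iff_le.2 hF
        simpa using this⟩
      left_inv := fun y => by simp
      right_inv := fun F => by simp }
  have hcard : Nat.card (Set.Iic p) = 2 ^ s.card := by
    rw [Nat.card_congr (e1.trans e2), ← Finset.coe_Iic, Nat.card_coe_set_eq,
      Set.ncard_coe_finset, Finset.Iic_eq_powerset, Finset.card_powerset]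
  rw [card_Iic hs] at hcard
  exact (Nat.pow_right_injective (by norm_num) hcard.symm)

lemma eF_self {σ : P} : eF hs σ σ = Finset.univ := by
  have h1 : (eF hs σ σ).card = rk hs σ := eF_card hs le_rfl
  have : (Finset.univ : Finset (Fin (rk hs σ))).card = rk hs σ := by simp
  exact Finset.eq_univ_of_card _ (h1.trans this.symm)

lemma eF_bot (σ : P) : eF hs σ (⊥ : P) = ∅ := by
  have h1 : (eF hs σ (⊥ : P)).card = 0 := by rw [eF_card hs bot_le, rk_bot]
  exact Finset.card_eq_zero.1 h1

lemma eF_symm_apply {σ : P} (t : Finset (Fin (rk hs σ))) :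
    eF hs σ ((ee hs σ).symm t).1 = t := by
  have h : ((ee hs σ).symm t).1 ≤ σ := ((ee hs σ).symm t).2
  rw [eF, dif_pos h]
  have : (⟨((ee hs σ).symm t).1, h⟩ : Set.Iic σ) = (ee hs σ).symm t := rfl
  rw [this, OrderIso.apply_symm_apply]

lemma eF_inf (m : P → P → P)
    (hm : ∀ p q : P, (∃ z : P, p ≤ z ∧ q ≤ z) → IsGreatest {w : P | w ≤ p ∧ w ≤ q} (m p q))
    {σ p q : P} (hp : p ≤ σ) (hq : q ≤ σ) :
    eF hs σ (m p q) = eF hs σ p ∩ eF hs σ q := by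
  obtain ⟨⟨hm1, hm2⟩, hm3⟩ := hm p q ⟨σ, hp, hq⟩
  have hmσ : m p q ≤ σ := hm1.trans hp
  apply subset_antisymm
  · exact Finset.subset_inter ((eF_le_iff hs hmσ hp).2 hm1) ((eF_le_iff hs hmσ hq).2 hm2)
  · set w : P := ((ee hs σ).symm (eF hs σ p ∩ eF hs σ q)).1 with hw
    have hwσ : w ≤ σ := ((ee hs σ).symm _).2
    have hwF : eF hs σ w = eF hs σ p ∩ eF hs σ q := eF_symm_apply hs _
    have hwp : w ≤ p := (eF_le_iff hs hwσ hp).1 (by rw [hwF]; exact Finset.inter_subset_left)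
    have hwq : w ≤ q := (eF_le_iff hs hwσ hq).1 (by rw [hwF]; exact Finset.inter_subset_right)
    have : w ≤ m p q := hm3 ⟨hwp, hwq⟩
    rw [← hwF]
    exact (eF_le_iff hs hwσ hmσ).2 this

lemma exists_minUB {a : Set P} (ha : IsLowerSet a) {σ p q : P} (hσ : σ ∈ a)
    (hp : p ≤ σ) (hq : q ≤ σ) :
    ∃ w : P, w ≤ σ ∧ w ∈ minUB a p q ∧ eF hs σ w = eF hs σ p ∪ eF hs σ q ∧
      ∀ z ∈ minUB a p q, z ≤ σ → z = w := by
  set w : P := ((ee hs σ).symm (eF hs σ p ∪ eF hs σ q)).1 with hwdef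
  have hwσ : w ≤ σ := ((ee hs σ).symm _).2
  have hwF : eF hs σ w = eF hs σ p ∪ eF hs σ q := eF_symm_apply hs _
  have hpw : p ≤ w := (eF_le_iff hs hp hwσ).1 (by rw [hwF]; exact Finset.subset_union_left)
  have hqw : q ≤ w := (eF_le_iff hs hq hwσ).1 (by rw [hwF]; exact Finset.subset_union_right)
  have hwa : w ∈ a := ha hwσ hσ
  have hwmin : ∀ z' ∈ a, p ≤ z' → q ≤ z' → z' ≤ w → z' = w := by
    intro z' _ hpz' hqz' hz'w
    have hz'σ : z' ≤ σ := hz'w.trans hwσ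
    refine eF_inj hs hz'σ hwσ (subset_antisymm ((eF_le_iff hs hz'σ hwσ).2 hz'w) ?_)
    rw [hwF]
    exact Finset.union_subset ((eF_le_iff hs hp hz'σ).2 hpz') ((eF_le_iff hs hq hz'σ).2 hqz')
  refine ⟨w, hwσ, ⟨hwa, hpw, hqw, hwmin⟩, hwF, fun z hz hzσ => ?_⟩
  obtain ⟨hza, hpz, hqz, hzmin⟩ := hz
  have hwz : w ≤ z := by
    refine (eF_le_iff hs hwσ hzσ).1 ?_
    rw [hwF]
    exact Finset.union_subset ((eF_le_iff hs hp hzσ).2 hpz) ((eF_le_iff hs hq hzσ).2 hqz)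
  exact (hzmin w hwa hpw hqw hwz).symm

lemma rank_rel (m : P → P → P)
    (hm : ∀ p q : P, (∃ z : P, p ≤ z ∧ q ≤ z) → IsGreatest {w : P | w ≤ p ∧ w ≤ q} (m p q))
    {a : Set P} (ha : IsLowerSet a) {p q z : P} (hpq : ¬ p ≤ q) (hqp : ¬ q ≤ p)
    (hz : z ∈ minUB a p q) :
    rk hs (m p q) + rk hs z = rk hs p + rk hs q ∧
      rk hs (m p q) < rk hs p ∧ rk hs (m p q) < rk hs q ∧
      rk hs p < rk hs z ∧ rk hs q < rk hs z := by
  obtain ⟨hza, hpz, hqz, hzmin⟩ := hz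
  -- use σ := z
  obtain ⟨w, hwz, hwmem, hwF, huniq⟩ := exists_minUB hs ha hza hpz hqz
  have hzw : z = w := huniq z ⟨hza, hpz, hqz, hzmin⟩ le_rfl
  have hFz : eF hs z z = eF hs z p ∪ eF hs z q := by rw [← hzw] at hwF; exact hwF
  have hFm : eF hs z (m p q) = eF hs z p ∩ eF hs z q := eF_inf hs m hm hpz hqz
  obtain ⟨⟨hm1, hm2⟩, _⟩ := hm p q ⟨z, hpz, hqz⟩
  have hmz : m p q ≤ z := hm1.trans hpz
  have c1 : rk hs (m p q) = (eF hs z p ∩ eF hs z q).card := by rw [← hFm, eF_card hs hmz]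
  have c2 : rk hs z = (eF hs z p ∪ eF hs z q).card := by
    rw [← hFz, eF_card hs le_rfl]
  have c3 : rk hs p = (eF hs z p).card := (eF_card hs hpz).symm
  have c4 : rk hs q = (eF hs z q).card := (eF_card hs hqz).symm
  refine ⟨?_, ?_, ?_, ?_, ?_⟩
  · have h5 := Finset.card_union_add_card_inter (eF hs z p) (eF hs z q)
    omega
  · exact rk_lt_rk hs (lt_of_le_of_ne hm1 (fun h => hpq (h ▸ hm2)))
  · exact rk_lt_rk hs (lt_of_le_of_ne hm2 (fun h => hqp (h ▸ hm1)))
  · exact rk_lt_rk hs (lt_of_le_of_ne hpz (fun h => hqp (h ▸ hqz)))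
  · exact rk_lt_rk hs (lt_of_le_of_ne hqz (fun h => hpq (h ▸ hpz)))

end Rank

section Phi
variable {P : Type*} [Fintype P] [PartialOrder P] [OrderBot P]
variable (kk : Type*) [Field kk]
variable (hs : ∀ p : P, ∃ n : ℕ, Nonempty (Set.Iic p ≃o Finset (Fin n)))

noncomputable def ph (σ : P) : MvPolynomial P kk →ₐ[kk] MvPolynomial (Fin (rk hs σ)) kk :=
  aeval fun p => if p ≤ σ then ∏ i ∈ eF hs σ p, X i else 0

lemma ph_X_le {σ p : P} (h : p ≤ σ) :
    ph kk hs σ (X p) = ∏ i ∈ eF hs σ p, X i := by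
  rw [ph, aeval_X, if_pos h]

lemma ph_X_nle {σ p : P} (h : ¬ p ≤ σ) : ph kk hs σ (X p) = 0 := by
  rw [ph, aeval_X, if_neg h]

lemma ph_bot_sub_one (σ : P) : ph kk hs σ (X (⊥ : P) - 1) = 0 := by
  rw [map_sub, map_one, ph_X_le kk hs bot_le, eF_bot]
  simp

lemma ph_gens (m : P → P → P)
    (hm : ∀ p q : P, (∃ z : P, p ≤ z ∧ q ≤ z) → IsGreatest {w : P | w ≤ p ∧ w ≤ q} (m p q))
    {a : Set P} (ha : IsLowerSet a) {σ : P} (hσ : σ ∈ a)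
    {f : MvPolynomial P kk} (hf : f ∈ faceGens P kk m a) : ph kk hs σ f = 0 := by
  rcases hf with ⟨p, hp, rfl⟩ | ⟨p, q, hpa, hqa, hpq, hqp, rfl⟩
  · refine ph_X_nle kk hs fun h => hp (ha h hσ)
  · rw [map_sub, map_mul, map_mul, map_sum]
    have hsum : ∀ z : P, ph kk hs σ (if z ∈ minUB a p q then (X z : MvPolynomial P kk) else 0)
        = if z ∈ minUB a p q then ph kk hs σ (X z) else 0 := by
      intro z
      by_cases hz : z ∈ minUB a p q <;> simp [hz]
    by_cases hp2 : p ≤ σ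
    · by_cases hq2 : q ≤ σ
      · -- p, q ≤ σ : genuine computation
        obtain ⟨w, hwσ, hwmem, hwF, huniq⟩ := exists_minUB hs ha hσ hp2 hq2
        have hmσ : m p q ≤ σ := ((hm p q ⟨σ, hp2, hq2⟩).1.1).trans hp2
        have hsum2 : (∑ z : P, ph kk hs σ (if z ∈ minUB a p q then (X z : MvPolynomial P kk) else 0))
            = ∏ i ∈ eF hs σ p ∪ eF hs σ q, X i := by
          rw [Finset.sum_congr rfl fun z _ => hsum z]
          rw [Finset.sum_eq_single_of_mem w (Finset.mem_univ w)]
          · rw [if_pos hwmem, ph_X_le kk hs hwσ, hwF]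
          · intro b _ hbw
            by_cases hb : b ∈ minUB a p q
            · rw [if_pos hb]
              by_cases hbσ : b ≤ σ
              · exact absurd (huniq b hb hbσ) hbw
              · exact ph_X_nle kk hs hbσ
            · rw [if_neg hb]
        rw [hsum2, ph_X_le kk hs hp2, ph_X_le kk hs hq2, ph_X_le kk hs hmσ,
          eF_inf hs m hm hp2 hq2]
        rw [sub_eq_zero, ← Finset.prod_union_inter, mul_comm]
      · -- q ≰ σ
        have hz0 : ∀ z : P, z ∈ minUB a p q → ¬ z ≤ σ := fun z hz h =>
          hq2 (hz.2.2.1.trans h)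
        rw [ph_X_nle kk hs hq2, mul_zero]
        have : (∑ z : P, ph kk hs σ (if z ∈ minUB a p q then (X z : MvPolynomial P kk) else 0)) = 0 := by
          refine Finset.sum_eq_zero fun z _ => ?_
          rw [hsum]
          by_cases hz : z ∈ minUB a p q
          · rw [if_pos hz, ph_X_nle kk hs (hz0 z hz)]
          · rw [if_neg hz]
        rw [this, mul_zero, sub_zero]
    · have hz0 : ∀ z : P, z ∈ minUB a p q → ¬ z ≤ σ := fun z hz h =>
        hp2 (hz.2.1.trans h)
      rw [ph_X_nle kk hs hp2, zero_mul]
      have : (∑ z : P, ph kk hs σ (if z ∈ minUB a p q then (X z : MvPolynomial P kk) else 0)) = 0 := by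
        refine Finset.sum_eq_zero fun z _ => ?_
        rw [hsum]
        by_cases hz : z ∈ minUB a p q
        · rw [if_pos hz, ph_X_nle kk hs (hz0 z hz)]
        · rw [if_neg hz]
      rw [this, mul_zero, sub_zero]

end Phi

section Mono
variable {P : Type*} [Fintype P] [PartialOrder P] [OrderBot P]
variable (kk : Type*) [Field kk]
variable (hs : ∀ p : P, ∃ n : ℕ, Nonempty (Set.Iic p ≃o Finset (Fin n)))

noncomputable def chiF {n : ℕ} (s : Finset (Fin n)) : Fin n →₀ ℕ :=
  ∑ i ∈ s, Finsupp.single i 1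

lemma chiF_apply {n : ℕ} (s : Finset (Fin n)) (i : Fin n) :
    chiF s i = if i ∈ s then 1 else 0 := by
  rw [chiF, Finset.sum_apply']
  rw [Finset.sum_congr rfl fun j _ => Finsupp.single_apply]
  exact Finset.sum_ite_eq' s i fun _ => 1

lemma prod_X_chi {n : ℕ} (s : Finset (Fin n)) :
    (∏ i ∈ s, (X i : MvPolynomial (Fin n) kk)) = monomial (chiF s) 1 := by
  classical
  refine Finset.cons_induction_on s ?_ ?_
  · simp [chiF]
  · intro a s' ha ih
    have hc : chiF (Finset.cons a s' ha) = Finsupp.single a 1 + chiF s' := by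
      rw [chiF, chiF, Finset.sum_cons]
    have hX : (X a : MvPolynomial (Fin n) kk) = monomial (Finsupp.single a 1) 1 := by
      rw [← X_pow_eq_monomial, pow_one]
    rw [Finset.prod_cons, ih, hc, hX, monomial_mul, mul_one]

lemma prod_monomial_one {ι τ : Type*} (s : Finset τ) (f : τ → (ι →₀ ℕ)) :
    (∏ t ∈ s, (monomial (f t) (1 : kk))) = monomial (∑ t ∈ s, f t) 1 := by
  classical
  refine Finset.cons_induction_on s ?_ ?_
  · simp
  · intro a s' ha ih
    rw [Finset.prod_cons, ih, Finset.sum_cons, monomial_mul, mul_one]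

noncomputable def EE (σ : P) (d : P →₀ ℕ) : Fin (rk hs σ) →₀ ℕ :=
  d.sum fun p k => k • chiF (eF hs σ p)

lemma EE_zero (σ : P) : EE hs σ 0 = 0 := Finsupp.sum_zero_index

lemma EE_add (σ : P) (d d' : P →₀ ℕ) : EE hs σ (d + d') = EE hs σ d + EE hs σ d' :=
  Finsupp.sum_add_index' (fun _ => by simp) (fun _ b1 b2 => by rw [add_smul])

lemma EE_single (σ p : P) (k : ℕ) : EE hs σ (Finsupp.single p k) = k • chiF (eF hs σ p) :=
  Finsupp.sum_single_index (by simp)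

lemma EE_apply (σ : P) (d : P →₀ ℕ) (i : Fin (rk hs σ)) :
    EE hs σ d i = ∑ p ∈ d.support, d p * (if i ∈ eF hs σ p then 1 else 0) := by
  rw [EE, Finsupp.sum, Finset.sum_apply']
  refine Finset.sum_congr rfl fun p _ => ?_
  rw [Finsupp.smul_apply, chiF_apply, smul_eq_mul]

lemma EE_ge (σ : P) (d : P →₀ ℕ) {p : P} (hp : p ∈ d.support) {i : Fin (rk hs σ)}
    (hi : i ∈ eF hs σ p) : d p ≤ EE hs σ d i := by
  rw [EE_apply]
  have h1 : ∀ q ∈ d.support, 0 ≤ d q * (if i ∈ eF hs σ q then 1 else 0) :=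
    fun q _ => Nat.zero_le _
  have h2 := Finset.single_le_sum h1 hp
  rwa [if_pos hi, mul_one] at h2

lemma ph_monomial (σ : P) (d : P →₀ ℕ) (hd : ∀ p ∈ d.support, p ≤ σ) :
    ph kk hs σ (monomial d (1 : kk)) = monomial (EE hs σ d) 1 := by
  rw [monomial_eq, C_1, one_mul, Finsupp.prod, map_prod]
  rw [Finset.prod_congr rfl fun p hp => ?_]
  · rw [prod_monomial_one]
    congr 1
  · rw [map_pow, ph_X_le kk hs (hd p hp), prod_X_chi, monomial_pow, one_pow]

lemma ph_monomial_zero (σ : P) (d : P →₀ ℕ) {p : P} (hp : p ∈ d.support) (hpσ : ¬ p ≤ σ) :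
    ph kk hs σ (monomial d (1 : kk)) = 0 := by
  rw [monomial_eq, C_1, one_mul, Finsupp.prod, map_prod]
  refine Finset.prod_eq_zero hp ?_
  rw [map_pow, ph_X_nle kk hs hpσ]
  exact zero_pow (Finsupp.mem_support_iff.1 hp)

/-- Standard monomials for the lower set `a`. -/
def Std (a : Set P) (d : P →₀ ℕ) : Prop :=
  (∀ p ∈ d.support, p ∈ a) ∧ (⊥ : P) ∉ d.support ∧
    ∀ p ∈ d.support, ∀ q ∈ d.support, p ≤ q ∨ q ≤ p

lemma chain_top {s : Finset P} (hne : s.Nonempty)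
    (hc : ∀ p ∈ s, ∀ q ∈ s, p ≤ q ∨ q ≤ p) : ∃ t ∈ s, ∀ p ∈ s, p ≤ t := by
  obtain ⟨t, ht, htm⟩ := s.exists_maximal hne
  refine ⟨t, ht, fun p hp => ?_⟩
  rcases hc p hp t ht with h | h
  · exact h
  · rcases eq_or_lt_of_le h with h1 | h1
    · exact le_of_eq h1.symm
    · exact absurd (htm hp h1.le) h1.not_ge

lemma eF_nonempty {σ p : P} (hp : p ≤ σ) (hpb : p ≠ ⊥) : (eF hs σ p).Nonempty := by
  rw [← Finset.card_pos, eF_card hs hp]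
  have := rk_lt_rk hs (bot_lt_iff_ne_bot.2 hpb)
  rw [rk_bot hs] at this
  exact this

lemma EE_eq_zero_iff {a : Set P} {σ : P} (d : P →₀ ℕ) (hstd : Std a d)
    (hdσ : ∀ p ∈ d.support, p ≤ σ) : EE hs σ d = 0 ↔ d = 0 := by
  constructor
  · intro h
    by_contra hd
    obtain ⟨p, hp⟩ := Finsupp.support_nonempty_iff.2 hd
    obtain ⟨i, hi⟩ := eF_nonempty hs (hdσ p hp) (fun hc => hstd.2.1 (hc ▸ hp))
    have h1 := EE_ge hs σ d hp hi
    rw [h, Finsupp.coe_zero, Pi.zero_apply, Nat.le_zero] at h1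
    exact absurd h1 (Finsupp.mem_support_iff.1 hp)
  · rintro rfl; exact EE_zero hs σ

lemma EE_support_iff {a : Set P} {σ : P} (d : P →₀ ℕ) (hstd : Std a d)
    (hdσ : ∀ p ∈ d.support, p ≤ σ) {t : P} (ht : t ∈ d.support)
    (htop : ∀ p ∈ d.support, p ≤ t) (i : Fin (rk hs σ)) :
    EE hs σ d i ≠ 0 ↔ i ∈ eF hs σ t := by
  constructor
  · intro h
    rw [EE_apply] at h
    obtain ⟨p, hp, hne⟩ := Finset.exists_ne_zero_of_sum_ne_zero h
    have hip : i ∈ eF hs σ p := by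
      by_contra hc
      rw [if_neg hc, mul_zero] at hne
      exact hne rfl
    exact (eF_le_iff hs (hdσ p hp) (hdσ t ht)).2 (htop p hp) hip
  · intro h
    have h1 := EE_ge hs σ d ht h
    have h2 := Finsupp.mem_support_iff.1 ht
    omega

lemma EE_inj {a : Set P} {σ : P} : ∀ (k : ℕ) (d d' : P →₀ ℕ), d.support.card ≤ k →
    Std a d → Std a d' → (∀ p ∈ d.support, p ≤ σ) → (∀ p ∈ d'.support, p ≤ σ) →
    EE hs σ d = EE hs σ d' → d = d' := by
  intro k
  induction k with
  | zero =>
    intro d d' hcard hstd hstd' hdσ hd'σ hEE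
    have hd : d = 0 := by
      rw [← Finsupp.support_eq_empty, ← Finset.card_eq_zero]; omega
    subst hd
    rw [EE_zero] at hEE
    exact ((EE_eq_zero_iff hs d' hstd' hd'σ).1 hEE.symm).symm
  | succ n ih =>
    intro d d' hcard hstd hstd' hdσ hd'σ hEE
    by_cases hd : d = 0
    · subst hd
      rw [EE_zero] at hEE
      exact ((EE_eq_zero_iff hs d' hstd' hd'σ).1 hEE.symm).symm
    have hd' : d' ≠ 0 := by
      intro hc
      subst hc
      rw [EE_zero] at hEE
      exact hd ((EE_eq_zero_iff hs d hstd hdσ).1 hEE)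
    obtain ⟨t, ht, htop⟩ := chain_top (Finsupp.support_nonempty_iff.2 hd) hstd.2.2
    obtain ⟨t', ht', htop'⟩ := chain_top (Finsupp.support_nonempty_iff.2 hd') hstd'.2.2
    -- tops agree
    have htt : t = t' := by
      refine eF_inj hs (hdσ t ht) (hd'σ t' ht') (Finset.ext fun i => ?_)
      rw [← EE_support_iff hs d hstd hdσ ht htop i, ← EE_support_iff hs d' hstd' hd'σ ht' htop' i,
        hEE]
    subst htt
    -- find a coordinate isolating the top multiplicity, for any standard chain
    have hiso : ∀ (e : P →₀ ℕ), Std a e → (∀ p ∈ e.support, p ≤ σ) → t ∈ e.support →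
        (∀ p ∈ e.support, p ≤ t) → ∃ i ∈ eF hs σ t, EE hs σ e i = e t := by
      intro e hstde heσ hte htope
      by_cases hA : (e.support.erase t).Nonempty
      · obtain ⟨u, hu, hutop⟩ := chain_top hA (fun p hp q hq =>
          hstde.2.2 p (Finset.mem_of_mem_erase hp) q (Finset.mem_of_mem_erase hq))
        have hut : u < t :=
          lt_of_le_of_ne (htope u (Finset.mem_of_mem_erase hu)) (Finset.ne_of_mem_erase hu)
        have hsub : eF hs σ u ⊂ eF hs σ t := by
          refine Finset.ssubset_iff_subset_ne.2 ⟨(eF_le_iff hs (heσ u (Finset.mem_of_mem_erase hu))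
            (heσ t hte)).2 hut.le, fun hc => ?_⟩
          exact absurd (eF_inj hs (heσ u (Finset.mem_of_mem_erase hu)) (heσ t hte) hc) hut.ne
        obtain ⟨i, hit, hiu⟩ := Finset.exists_of_ssubset hsub
        refine ⟨i, hit, ?_⟩
        rw [EE_apply, Finset.sum_eq_single_of_mem t hte]
        · rw [if_pos hit, mul_one]
        · intro p hp hpt
          have hpu : p ≤ u := hutop p (Finset.mem_erase_of_ne_of_mem hpt hp)
          have : i ∉ eF hs σ p := fun hc =>
            hiu ((eF_le_iff hs (heσ p hp) (heσ u (Finset.mem_of_mem_erase hu))).2 hpu hc)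
          rw [if_neg this, mul_zero]
      · -- support = {t}
        obtain ⟨i, hit⟩ := eF_nonempty hs (heσ t hte) (fun hc => hstde.2.1 (hc ▸ hte))
        refine ⟨i, hit, ?_⟩
        have hsupp : e.support = {t} := by
          rw [Finset.not_nonempty_iff_eq_empty, Finset.erase_eq_empty_iff] at hA
          rcases hA with h | h
          · exact absurd (h ▸ hte) (Finset.notMem_empty t)
          · exact h
        rw [EE_apply, hsupp, Finset.sum_singleton, if_pos hit, mul_one]
    obtain ⟨i, hit, hi⟩ := hiso d hstd hdσ ht htop
    obtain ⟨i', hit', hi'⟩ := hiso d' hstd' hd'σ ht' htop'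
    have hdt : d t = d' t := by
      have e1 : EE hs σ d i = EE hs σ d' i := by rw [hEE]
      have e2 : EE hs σ d i' = EE hs σ d' i' := by rw [hEE]
      have h1 : d' t ≤ EE hs σ d' i := EE_ge hs σ d' ht' hit
      have h2 : d t ≤ EE hs σ d i' := EE_ge hs σ d ht hit'
      omega
    -- erase the top and induct
    have herase : Finsupp.erase t d = Finsupp.erase t d' := by
      have hd1 : Finsupp.erase t d + Finsupp.single t (d t) = d := Finsupp.erase_add_single t d
      have hd2 : Finsupp.erase t d' + Finsupp.single t (d' t) = d' := Finsupp.erase_add_single t d'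
      refine ih (Finsupp.erase t d) (Finsupp.erase t d') ?_ ?_ ?_ ?_ ?_ ?_
      · rw [Finsupp.support_erase]
        have := Finset.card_erase_of_mem ht
        omega
      · exact ⟨fun p hp => hstd.1 p (by rw [Finsupp.support_erase] at hp; exact Finset.mem_of_mem_erase hp),
          fun hc => hstd.2.1 (by rw [Finsupp.support_erase] at hc; exact Finset.mem_of_mem_erase hc),
          fun p hp q hq => hstd.2.2 p (by rw [Finsupp.support_erase] at hp; exact Finset.mem_of_mem_erase hp)
            q (by rw [Finsupp.support_erase] at hq; exact Finset.mem_of_mem_erase hq)⟩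
      · exact ⟨fun p hp => hstd'.1 p (by rw [Finsupp.support_erase] at hp; exact Finset.mem_of_mem_erase hp),
          fun hc => hstd'.2.1 (by rw [Finsupp.support_erase] at hc; exact Finset.mem_of_mem_erase hc),
          fun p hp q hq => hstd'.2.2 p (by rw [Finsupp.support_erase] at hp; exact Finset.mem_of_mem_erase hp)
            q (by rw [Finsupp.support_erase] at hq; exact Finset.mem_of_mem_erase hq)⟩
      · intro p hp
        rw [Finsupp.support_erase] at hp
        exact hdσ p (Finset.mem_of_mem_erase hp)
      · intro p hp
        rw [Finsupp.support_erase] at hp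
        exact hd'σ p (Finset.mem_of_mem_erase hp)
      · -- EE of erases agree
        have h1 : EE hs σ (Finsupp.erase t d) + EE hs σ (Finsupp.single t (d t)) = EE hs σ d := by
          rw [← EE_add, hd1]
        have h2 : EE hs σ (Finsupp.erase t d') + EE hs σ (Finsupp.single t (d' t)) = EE hs σ d' := by
          rw [← EE_add, hd2]
        ext j
        have e1 := DFunLike.congr_fun h1 j
        have e2 := DFunLike.congr_fun h2 j
        have e3 := DFunLike.congr_fun hEE j
        rw [Finsupp.add_apply] at e1 e2
        rw [hdt] at e1
        omega
    calc d = Finsupp.erase t d + Finsupp.single t (d t) := (Finsupp.erase_add_single t d).symm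
      _ = Finsupp.erase t d' + Finsupp.single t (d' t) := by rw [herase, hdt]
      _ = d' := Finsupp.erase_add_single t d'

end Mono

section Span
variable {P : Type*} [Fintype P] [PartialOrder P] [OrderBot P]
variable (kk : Type*) [Field kk]
variable (hs : ∀ p : P, ∃ n : ℕ, Nonempty (Set.Iic p ≃o Finset (Fin n)))

noncomputable def WW : ℕ := (Finset.univ.sup (rk hs) + 1) ^ 2

lemma rk_sq_lt (p : P) : rk hs p ^ 2 < WW hs := by
  have h1 : rk hs p ≤ Finset.univ.sup (rk hs) := Finset.le_sup (Finset.mem_univ p)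
  have h2 : rk hs p < Finset.univ.sup (rk hs) + 1 := by omega
  exact Nat.pow_lt_pow_left h2 (by norm_num)

noncomputable def mu (d : P →₀ ℕ) : ℕ := d.sum fun p k => k * (WW hs - rk hs p ^ 2)

lemma mu_add (d d' : P →₀ ℕ) : mu hs (d + d') = mu hs d + mu hs d' :=
  Finsupp.sum_add_index' (fun _ => by simp) (fun _ b1 b2 => by rw [add_mul])

lemma mu_single (p : P) (k : ℕ) : mu hs (Finsupp.single p k) = k * (WW hs - rk hs p ^ 2) :=
  Finsupp.sum_single_index (by simp)

lemma mu_pos {d : P →₀ ℕ} (hd : d ≠ 0) : 0 < mu hs d := by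
  obtain ⟨p, hp⟩ := Finsupp.support_nonempty_iff.2 hd
  have h1 : ∀ q ∈ d.support, 0 ≤ d q * (WW hs - rk hs q ^ 2) := fun q _ => Nat.zero_le _
  have h2 : d p * (WW hs - rk hs p ^ 2) ≤ mu hs d := Finset.single_le_sum h1 hp
  have h3 := rk_sq_lt hs p
  have h4 := Finsupp.mem_support_iff.1 hp
  have h5 : 1 ≤ d p * (WW hs - rk hs p ^ 2) := by
    have h6 : 1 ≤ WW hs - rk hs p ^ 2 := by omega
    calc 1 = 1 * 1 := by ring
      _ ≤ d p * (WW hs - rk hs p ^ 2) := Nat.mul_le_mul (by omega) h6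
  omega

lemma sub_single_add {d : P →₀ ℕ} {p : P} (hp : p ∈ d.support) :
    d = Finsupp.single p 1 + (d - Finsupp.single p 1) := by
  ext q
  have h1 := Finsupp.mem_support_iff.1 hp
  by_cases hq : p = q
  · subst hq
    simp [Finsupp.single_apply]
    omega
  · simp [Finsupp.single_apply, hq]

/-- The big submodule: the face ideal together with the span of standard monomials. -/
noncomputable def TT (m : P → P → P) (a : Set P) : Submodule kk (MvPolynomial P kk) :=
  Submodule.restrictScalars kk
      (Ideal.span (faceGens P kk m a) ⊔ Ideal.span {(X (⊥ : P) : MvPolynomial P kk) - 1}) ⊔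
    Submodule.span kk {f | ∃ d : P →₀ ℕ, Std a d ∧ f = monomial d 1}

lemma ideal_mem_TT (m : P → P → P) (a : Set P) {f : MvPolynomial P kk}
    (hf : f ∈ Ideal.span (faceGens P kk m a) ⊔ Ideal.span {(X (⊥ : P) : MvPolynomial P kk) - 1}) :
    f ∈ TT kk m a :=
  Submodule.mem_sup_left hf

lemma X_mul_monomial' (p : P) (e : P →₀ ℕ) :
    (X p : MvPolynomial P kk) * monomial e 1 = monomial (Finsupp.single p 1 + e) 1 := by
  rw [← pow_one (X p : MvPolynomial P kk), X_pow_eq_monomial, monomial_mul, mul_one]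

lemma sq_ineq {rm rz rp rq : ℕ} (h1 : rm + rz = rp + rq) (h2 : rm < rp) (h3 : rm < rq) :
    rp ^ 2 + rq ^ 2 < rm ^ 2 + rz ^ 2 := by
  obtain ⟨u, hu⟩ := Nat.exists_eq_add_of_lt h2
  obtain ⟨v, hv⟩ := Nat.exists_eq_add_of_lt h3
  have hz : rz = rm + u + v + 2 := by omega
  subst hu hv hz
  ring_nf
  nlinarith

lemma monomial_mem_TT (m : P → P → P)
    (hm : ∀ p q : P, (∃ z : P, p ≤ z ∧ q ≤ z) → IsGreatest {w : P | w ≤ p ∧ w ≤ q} (m p q))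
    {a : Set P} (ha : IsLowerSet a) :
    ∀ (N : ℕ) (d : P →₀ ℕ), mu hs d ≤ N → (monomial d (1 : kk)) ∈ TT kk m a := by
  intro N
  induction N with
  | zero =>
    intro d hd
    have hd0 : d = 0 := by
      by_contra hc
      have := mu_pos hs hc
      omega
    subst hd0
    refine Submodule.mem_sup_right (Submodule.subset_span ⟨0, ⟨?_, ?_, ?_⟩, rfl⟩) <;> simp
  | succ N ih =>
    intro d hd
    by_cases hout : ∃ p ∈ d.support, p ∉ a
    · -- a variable outside `a` divides the monomial
      obtain ⟨p, hp, hpa⟩ := hout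
      have hXp : (X p : MvPolynomial P kk) ∈ Ideal.span (faceGens P kk m a) :=
        Ideal.subset_span (Or.inl ⟨p, hpa, rfl⟩)
      have heq : (monomial d (1 : kk)) = X p * monomial (d - Finsupp.single p 1) 1 := by
        rw [X_mul_monomial', ← sub_single_add hp]
      rw [heq]
      exact ideal_mem_TT kk m a (Ideal.mem_sup_left (Ideal.mul_mem_right _ _ hXp))
    · push_neg at hout
      by_cases hbot : (⊥ : P) ∈ d.support
      · -- strip off x_⊥ using x_⊥ - 1
        have hms : mu hs (Finsupp.single (⊥ : P) 1) = WW hs := by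
          rw [mu_single, rk_bot hs]
          norm_num
        have hmu : mu hs d = WW hs + mu hs (d - Finsupp.single (⊥ : P) 1) := by
          conv_lhs => rw [sub_single_add hbot]
          rw [mu_add, hms]
        have hW : 1 ≤ WW hs := by have := rk_sq_lt hs (⊥ : P); omega
        have hmu2 : mu hs (d - Finsupp.single (⊥ : P) 1) ≤ N := by omega
        have heq : (monomial d (1 : kk)) = X ⊥ * monomial (d - Finsupp.single (⊥ : P) 1) 1 := by
          rw [X_mul_monomial', ← sub_single_add hbot]
        have hstep : (monomial d (1 : kk)) =
            (X ⊥ - 1) * monomial (d - Finsupp.single (⊥ : P) 1) 1 +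
              monomial (d - Finsupp.single (⊥ : P) 1) 1 := by
          rw [heq]; ring
        rw [hstep]
        exact add_mem (ideal_mem_TT kk m a (Ideal.mem_sup_right
          (Ideal.mul_mem_right _ _ (Ideal.subset_span rfl)))) (ih _ hmu2)
      · by_cases hchain : ∀ p ∈ d.support, ∀ q ∈ d.support, p ≤ q ∨ q ≤ p
        · exact Submodule.mem_sup_right (Submodule.subset_span ⟨d, ⟨hout, hbot, hchain⟩, rfl⟩)
        · -- straightening step
          push_neg at hchain
          obtain ⟨p, hp, q, hq, hpq, hqp⟩ := hchain
          have hpq_ne : p ≠ q := fun hc => hpq (le_of_eq hc)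
          have hdp := Finsupp.mem_support_iff.1 hp
          have hdq := Finsupp.mem_support_iff.1 hq
          set d2 : P →₀ ℕ := d - Finsupp.single p 1 - Finsupp.single q 1 with hd2def
          have hsplit : d = Finsupp.single p 1 + (Finsupp.single q 1 + d2) := by
            ext r
            simp only [hd2def, Finsupp.add_apply, Finsupp.tsub_apply, Finsupp.single_apply]
            by_cases hrp : p = r
            · subst hrp
              rw [if_pos rfl, if_neg (fun hc => hpq_ne hc.symm)]
              omega
            · rw [if_neg hrp]
              by_cases hrq : q = r
              · subst hrq
                rw [if_pos rfl]
                omega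
              · rw [if_neg hrq]
                omega
          have hmusplit : mu hs d = (WW hs - rk hs p ^ 2) + ((WW hs - rk hs q ^ 2) + mu hs d2) := by
            conv_lhs => rw [hsplit]
            rw [mu_add, mu_add, mu_single, mu_single, one_mul, one_mul]
          have heq : (monomial d (1 : kk)) = (X p * X q) * monomial d2 1 := by
            conv_lhs => rw [hsplit]
            rw [← X_mul_monomial', ← X_mul_monomial', mul_assoc]
          have hrel : (X p * X q - X (m p q) *
              ∑ z : P, if z ∈ minUB a p q then (X z : MvPolynomial P kk) else 0)
              ∈ Ideal.span (faceGens P kk m a) :=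
            Ideal.subset_span (Or.inr ⟨p, q, hout p hp, hout q hq, hpq, hqp, rfl⟩)
          have hstep : (monomial d (1 : kk)) =
              (X p * X q - X (m p q) *
                ∑ z : P, if z ∈ minUB a p q then (X z : MvPolynomial P kk) else 0) * monomial d2 1
              + ∑ z : P, if z ∈ minUB a p q then
                  (X z : MvPolynomial P kk) * (X (m p q) * monomial d2 1) else 0 := by
            rw [heq]
            have h1 : (∑ z : P, if z ∈ minUB a p q then
                  (X z : MvPolynomial P kk) * (X (m p q) * monomial d2 1) else 0)
                = (∑ z : P, if z ∈ minUB a p q then (X z : MvPolynomial P kk) else 0)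
                  * (X (m p q) * monomial d2 1) := by
              rw [Finset.sum_mul]
              refine Finset.sum_congr rfl fun z _ => ?_
              by_cases hz : z ∈ minUB a p q
              · rw [if_pos hz, if_pos hz]
              · rw [if_neg hz, if_neg hz, zero_mul]
            rw [h1]
            ring
          rw [hstep]
          refine add_mem (ideal_mem_TT kk m a (Ideal.mem_sup_left
            (Ideal.mul_mem_right _ _ hrel))) (Submodule.sum_mem _ fun z _ => ?_)
          by_cases hz : z ∈ minUB a p q
          · rw [if_pos hz]
            obtain ⟨hsum, h2, h3, h4, h5⟩ := rank_rel hs m hm ha hpq hqp hz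
            have hmuz : mu hs (Finsupp.single z 1 + (Finsupp.single (m p q) 1 + d2))
                = (WW hs - rk hs z ^ 2) + ((WW hs - rk hs (m p q) ^ 2) + mu hs d2) := by
              rw [mu_add, mu_add, mu_single, mu_single, one_mul, one_mul]
            have hineq := sq_ineq hsum h2 h3
            have w1 := rk_sq_lt hs p
            have w2 := rk_sq_lt hs q
            have w3 := rk_sq_lt hs z
            have w4 := rk_sq_lt hs (m p q)
            have hmuz2 : mu hs (Finsupp.single z 1 + (Finsupp.single (m p q) 1 + d2)) ≤ N := by
              omega
            have heqz : (X z : MvPolynomial P kk) * (X (m p q) * monomial d2 1)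
                = monomial (Finsupp.single z 1 + (Finsupp.single (m p q) 1 + d2)) 1 := by
              rw [X_mul_monomial', X_mul_monomial']
            rw [heqz]
            exact ih _ hmuz2
          · rw [if_neg hz]
            exact Submodule.zero_mem _

include hs in
lemma TT_eq_top (m : P → P → P)
    (hm : ∀ p q : P, (∃ z : P, p ≤ z ∧ q ≤ z) → IsGreatest {w : P | w ≤ p ∧ w ≤ q} (m p q))
    {a : Set P} (ha : IsLowerSet a) (f : MvPolynomial P kk) : f ∈ TT kk m a := by
  rw [← MvPolynomial.support_sum_monomial_coeff f]
  refine Submodule.sum_mem _ fun d _ => ?_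
  have h1 : (monomial d (coeff d f)) = coeff d f • monomial d (1 : kk) := by
    rw [MvPolynomial.smul_monomial, smul_eq_mul, mul_one]
  rw [h1]
  exact Submodule.smul_mem _ _ (monomial_mem_TT kk hs m hm ha (mu hs d) d le_rfl)

end Span

/-- The dehomogenized face ideal `I_a^P` in `S = k[x_p : p ∈ P]/(x_⊥ − 1)`. -/
noncomputable def faceIdeal (P : Type*) [Fintype P] [PartialOrder P] [OrderBot P]
    (kk : Type*) [Field kk] (m : P → P → P) (a : Set P) :
    Ideal (MvPolynomial P kk ⧸ Ideal.span {(X (⊥ : P) : MvPolynomial P kk) - 1}) :=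
  Ideal.map (Ideal.Quotient.mk _) (Ideal.span (faceGens P kk m a))



section Main
variable {P : Type*} [Fintype P] [PartialOrder P] [OrderBot P]
variable (kk : Type*) [Field kk]
variable (hs : ∀ p : P, ∃ n : ℕ, Nonempty (Set.Iic p ≃o Finset (Fin n)))

lemma supp_std {a : Set P} {g : MvPolynomial P kk}
    (hg : g ∈ Submodule.span kk {f | ∃ d : P →₀ ℕ, Std a d ∧ f = monomial d 1})
    {d : P →₀ ℕ} (hd : ¬ Std a d) : coeff d g = 0 := by
  induction hg using Submodule.span_induction with
  | mem f hf =>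
    obtain ⟨e, he, rfl⟩ := hf
    rw [coeff_monomial, if_neg (fun hc => hd (by rw [← hc]; exact he))]
  | zero => simp
  | add x y _ _ hx hy => rw [coeff_add, hx, hy, add_zero]
  | smul c x _ hx => rw [MvPolynomial.coeff_smul, hx, smul_zero]

lemma std_indep {a : Set P} (hbot : (⊥ : P) ∈ a)
    {g : MvPolynomial P kk}
    (hg : g ∈ Submodule.span kk {f | ∃ d : P →₀ ℕ, Std a d ∧ f = monomial d 1})
    (hv : ∀ σ ∈ a, ph kk hs σ g = 0) : g = 0 := by
  by_contra hg0
  obtain ⟨d0, hd0⟩ := (MvPolynomial.support_nonempty).2 hg0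
  have hstd : ∀ d ∈ g.support, Std a d := by
    intro d hd
    by_contra hc
    exact (MvPolynomial.mem_support_iff.1 hd) (supp_std kk hg hc)
  have hd0std := hstd d0 hd0
  obtain ⟨σ, hσa, hσtop⟩ : ∃ σ ∈ a, ∀ p ∈ d0.support, p ≤ σ := by
    by_cases hne : d0.support.Nonempty
    · obtain ⟨t, ht, htop⟩ := chain_top hne hd0std.2.2
      exact ⟨t, hd0std.1 t ht, htop⟩
    · exact ⟨⊥, hbot, fun p hp => absurd ⟨p, hp⟩ hne⟩
  have h0 := hv σ hσa
  have hrepr : ph kk hs σ g = ∑ d ∈ g.support, coeff d g • ph kk hs σ (monomial d 1) := by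
    conv_lhs => rw [← MvPolynomial.support_sum_monomial_coeff g]
    rw [map_sum]
    refine Finset.sum_congr rfl fun d _ => ?_
    have h1 : (monomial d (coeff d g)) = coeff d g • monomial d (1 : kk) := by
      rw [MvPolynomial.smul_monomial, smul_eq_mul, mul_one]
    rw [h1, map_smul]
  have hcoeff : coeff (EE hs σ d0) (ph kk hs σ g) = coeff d0 g := by
    rw [hrepr, MvPolynomial.coeff_sum]
    rw [Finset.sum_eq_single_of_mem d0 hd0]
    · rw [ph_monomial kk hs σ d0 hσtop, MvPolynomial.coeff_smul, coeff_monomial, if_pos rfl,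
        smul_eq_mul, mul_one]
    · intro d hd hdne
      rw [MvPolynomial.coeff_smul]
      by_cases hdσ : ∀ p ∈ d.support, p ≤ σ
      · rw [ph_monomial kk hs σ d hdσ, coeff_monomial]
        have hne2 : EE hs σ d ≠ EE hs σ d0 := fun hc =>
          hdne (EE_inj hs d.support.card d d0 le_rfl (hstd d hd) hd0std hdσ hσtop hc)
        rw [if_neg hne2, smul_zero]
      · push_neg at hdσ
        obtain ⟨p, hp, hpσ⟩ := hdσ
        rw [ph_monomial_zero kk hs σ d hp hpσ, MvPolynomial.coeff_zero, smul_zero]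
  rw [h0, MvPolynomial.coeff_zero] at hcoeff
  exact (MvPolynomial.mem_support_iff.1 hd0) hcoeff.symm

lemma ph_vanish (m : P → P → P)
    (hm : ∀ p q : P, (∃ z : P, p ≤ z ∧ q ≤ z) → IsGreatest {w : P | w ≤ p ∧ w ≤ q} (m p q))
    {a : Set P} (ha : IsLowerSet a) {σ : P} (hσ : σ ∈ a) {f : MvPolynomial P kk}
    (hf : f ∈ Ideal.span (faceGens P kk m a)
      ⊔ Ideal.span {(X (⊥ : P) : MvPolynomial P kk) - 1}) :
    ph kk hs σ f = 0 := by
  have h1 : Ideal.span (faceGens P kk m a) ⊔ Ideal.span {(X (⊥ : P) : MvPolynomial P kk) - 1}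
      ≤ RingHom.ker (ph kk hs σ).toRingHom := by
    refine sup_le (Ideal.span_le.2 fun g hg => ?_) (Ideal.span_le.2 fun g hg => ?_)
    · exact ph_gens kk hs m hm ha hσ hg
    · rw [Set.mem_singleton_iff] at hg
      subst hg
      exact ph_bot_sub_one kk hs σ
  exact h1 hf

include hs in
lemma span_eq_ker (m : P → P → P)
    (hm : ∀ p q : P, (∃ z : P, p ≤ z ∧ q ≤ z) → IsGreatest {w : P | w ≤ p ∧ w ≤ q} (m p q))
    {a : Set P} (ha : IsLowerSet a) (f : MvPolynomial P kk) :
    f ∈ Ideal.span (faceGens P kk m a) ⊔ Ideal.span {(X (⊥ : P) : MvPolynomial P kk) - 1}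
      ↔ ∀ σ ∈ a, ph kk hs σ f = 0 := by
  constructor
  · intro hf σ hσ
    exact ph_vanish kk hs m hm ha hσ hf
  · intro hv
    by_cases hae : a = ∅
    · subst hae
      have hX : (X (⊥ : P) : MvPolynomial P kk) ∈ Ideal.span (faceGens P kk m ∅) :=
        Ideal.subset_span (Or.inl ⟨⊥, by simp, rfl⟩)
      have hY : ((X (⊥ : P) : MvPolynomial P kk) - 1) ∈
          Ideal.span {(X (⊥ : P) : MvPolynomial P kk) - 1} := Ideal.subset_span rfl
      have h2 : (X (⊥ : P) : MvPolynomial P kk) - (X ⊥ - 1) ∈ Ideal.span (faceGens P kk m ∅)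
          ⊔ Ideal.span {(X (⊥ : P) : MvPolynomial P kk) - 1} :=
        sub_mem (Ideal.mem_sup_left hX) (Ideal.mem_sup_right hY)
      have h4 : (X (⊥ : P) : MvPolynomial P kk) - (X ⊥ - 1) = 1 := by ring
      rw [h4] at h2
      have h5 := (Ideal.eq_top_iff_one _).2 h2
      rw [h5]
      exact Submodule.mem_top
    · have hbot : (⊥ : P) ∈ a := by
        obtain ⟨x, hx⟩ := Set.nonempty_iff_ne_empty.2 hae
        exact ha bot_le hx
      obtain ⟨u, hu, v, hv2, huv⟩ := Submodule.mem_sup.1 (TT_eq_top kk hs m hm ha f)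
      have hvv : ∀ σ ∈ a, ph kk hs σ v = 0 := by
        intro σ hσ
        have hu0 : ph kk hs σ u = 0 := ph_vanish kk hs m hm ha hσ hu
        have : ph kk hs σ (u + v) = ph kk hs σ f := by rw [huv]
        rw [map_add, hu0, zero_add, hv σ hσ] at this
        exact this
      have hv0 : v = 0 := std_indep kk hs hbot hv2 hvv
      rw [← huv, hv0, add_zero]
      exact hu

lemma faceIdeal_eq (m : P → P → P) (a : Set P) :
    faceIdeal P kk m a = Ideal.map (Ideal.Quotient.mk
        (Ideal.span {(X (⊥ : P) : MvPolynomial P kk) - 1}))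
      (Ideal.span (faceGens P kk m a)
        ⊔ Ideal.span {(X (⊥ : P) : MvPolynomial P kk) - 1}) := by
  rw [faceIdeal, Ideal.map_sup]
  have h2 : Ideal.map (Ideal.Quotient.mk (Ideal.span {(X (⊥ : P) : MvPolynomial P kk) - 1}))
      (Ideal.span {(X (⊥ : P) : MvPolynomial P kk) - 1}) = ⊥ := by
    rw [Ideal.map_span, Set.image_singleton]
    have h3 : (Ideal.Quotient.mk (Ideal.span {(X (⊥ : P) : MvPolynomial P kk) - 1}))
        ((X (⊥ : P) : MvPolynomial P kk) - 1) = 0 := by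
      rw [Ideal.Quotient.eq_zero_iff_mem]
      exact Ideal.subset_span rfl
    rw [h3, Ideal.span_singleton_eq_bot.2 rfl]
  rw [h2, sup_bot_eq]

end Main

set_option maxHeartbeats 1000000 in
set_option synthInstance.maxHeartbeats 1000000 in
/-- Let `P` be a finite simplicial poset and `a`, `b` lower order ideals
of `P`.  Then in `S = k[x_p : p ∈ P]/(x_⊥ − 1)` one has
`I_a^P + I_b^P = I_{a∩b}^P` and `I_a^P ∩ I_b^P = I_{a∪b}^P`; consequently the ideals
`I_a^P` form a distributive lattice under sum and intersection. -/
theorem faceIdeal_sum_inter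
    {P : Type*} [Fintype P] [PartialOrder P] [OrderBot P]
    (kk : Type*) [Field kk]
    (hsimp : ∀ p : P, ∃ n : ℕ, Nonempty (Set.Iic p ≃o Finset (Fin n)))
    (m : P → P → P)
    (hm : ∀ p q : P, (∃ z : P, p ≤ z ∧ q ≤ z) →
        IsGreatest {w : P | w ≤ p ∧ w ≤ q} (m p q))
    (a b : Set P) (ha : IsLowerSet a) (hb : IsLowerSet b) :
    (faceIdeal P kk m a + faceIdeal P kk m b = faceIdeal P kk m (a ∩ b)) ∧
    (faceIdeal P kk m a ⊓ faceIdeal P kk m b = faceIdeal P kk m (a ∪ b)) ∧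
    (∀ c : Set P, IsLowerSet c →
      faceIdeal P kk m a ⊓ (faceIdeal P kk m b + faceIdeal P kk m c) =
        faceIdeal P kk m a ⊓ faceIdeal P kk m b +
          faceIdeal P kk m a ⊓ faceIdeal P kk m c) := by
  have E1 : ∀ (a b : Set P), IsLowerSet a → IsLowerSet b →
      faceIdeal P kk m a + faceIdeal P kk m b = faceIdeal P kk m (a ∩ b) := by
    intro a b ha hb
    rw [faceIdeal, faceIdeal, faceIdeal, Submodule.add_eq_sup, ← Ideal.map_sup,
      span_gens_sup kk m ha hb]
  have E2 : ∀ (a b : Set P), IsLowerSet a → IsLowerSet b →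
      faceIdeal P kk m a ⊓ faceIdeal P kk m b = faceIdeal P kk m (a ∪ b) := by
    intro a b ha hb
    have hIab : ∀ f : MvPolynomial P kk,
        f ∈ Ideal.span (faceGens P kk m (a ∪ b))
            ⊔ Ideal.span {(X (⊥ : P) : MvPolynomial P kk) - 1}
          ↔ (f ∈ Ideal.span (faceGens P kk m a)
              ⊔ Ideal.span {(X (⊥ : P) : MvPolynomial P kk) - 1}) ∧
            (f ∈ Ideal.span (faceGens P kk m b)
              ⊔ Ideal.span {(X (⊥ : P) : MvPolynomial P kk) - 1}) := by
      intro f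
      rw [span_eq_ker kk hsimp m hm ha f, span_eq_ker kk hsimp m hm hb f,
        span_eq_ker kk hsimp m hm (ha.union hb) f]
      constructor
      · intro h
        exact ⟨fun σ hσ => h σ (Or.inl hσ), fun σ hσ => h σ (Or.inr hσ)⟩
      · rintro ⟨h1, h2⟩ σ (hσ | hσ)
        exacts [h1 σ hσ, h2 σ hσ]
    rw [faceIdeal_eq, faceIdeal_eq, faceIdeal_eq]
    apply le_antisymm
    · intro x hx
      obtain ⟨hx1, hx2⟩ := Submodule.mem_inf.1 hx
      obtain ⟨f, hf, hfx⟩ :=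
        (Ideal.mem_map_iff_of_surjective _ Ideal.Quotient.mk_surjective).1 hx1
      obtain ⟨g, hg, hgx⟩ :=
        (Ideal.mem_map_iff_of_surjective _ Ideal.Quotient.mk_surjective).1 hx2
      have hker : f - g ∈ Ideal.span {(X (⊥ : P) : MvPolynomial P kk) - 1} := by
        have h0 : Ideal.Quotient.mk (Ideal.span {(X (⊥ : P) : MvPolynomial P kk) - 1}) (f - g)
            = 0 := by
          rw [map_sub, hfx, hgx, sub_self]
        rwa [← RingHom.mem_ker, Ideal.mk_ker] at h0
      have hfb : f ∈ Ideal.span (faceGens P kk m b)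
          ⊔ Ideal.span {(X (⊥ : P) : MvPolynomial P kk) - 1} := by
        have hfg : f = g + (f - g) := by ring
        rw [hfg]
        exact add_mem hg (Ideal.mem_sup_right hker)
      rw [← hfx]
      exact Ideal.mem_map_of_mem _ ((hIab f).2 ⟨hf, hfb⟩)
    · exact le_inf (Ideal.map_mono fun f hf => ((hIab f).1 hf).1)
        (Ideal.map_mono fun f hf => ((hIab f).1 hf).2)
  refine ⟨E1 a b ha hb, E2 a b ha hb, fun c hc => ?_⟩
  rw [E1 b c hb hc, E2 a (b ∩ c) ha (hb.inter hc), Set.union_inter_distrib_left,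
    ← E1 (a ∪ b) (a ∪ c) (ha.union hb) (ha.union hc), E2 a b ha hb, E2 a c ha hc]
end

section
/- Let H = ⊕_{i=0}^d H_i act decoupled on a pure d-dimensional simplicial complex Σ, let σ ∈ Σ be a face and β a facet containing σ. Then stab_H(σ) = ⊕_{x ∈ β∖σ} stab_H(β∖{x}). -/
/-!
Translativity makes face stabilizers antitone, so `stab σ` lies in every vertex stabilizer
of `σ`. Put `K x = stab (β ∖ {x})`. For `x ∈ β ∖ σ` we have `K x ≤ stab σ`, while the join
of the `K x` with `x ∈ σ` fixes every vertex of `β ∖ σ`; so it meets `stab σ` inside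
`stab β = 0` (for `d ≥ 1` because `H₀ ⊓ H₁ = 0`). As all `K x` together generate `H`, the
modular law in the subgroup lattice of the abelian group `H` gives
`stab σ = ⨆_{x ∈ β ∖ σ} K x`. Independence of this join is inherited from that of the `Hᵢ`.
-/

open scoped Pointwise

theorem iSupIndep.disjoint_biSup_of_subset_range {ι α L : Type*} [CompleteLattice L]
    {t : α → L} {e : ι → α} (ht : iSupIndep (t ∘ e)) {i : ι} {s : Set α}
    (hs : s ⊆ Set.range e) (hi : e i ∉ s) : Disjoint (t (e i)) (⨆ y ∈ s, t y) := by
  have := ht.disjoint_biSup (x := i) (y := e ⁻¹' s) hi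
  rwa [← Set.image_preimage_eq_of_subset hs, iSup_image]

namespace AddAction

variable {H V : Type*} [DecidableEq V]

theorem iInf_stabilizer_le_stabilizer_finset [AddGroup H] [AddAction H V] (τ : Finset V) :
    ⨅ v ∈ τ, stabilizer H v ≤ stabilizer H τ := fun g hg => by
  simp only [AddSubgroup.mem_iInf, mem_stabilizer_iff] at hg
  exact mem_stabilizer_finset'.2 fun v hv => by rwa [hg v hv]

def IsTranslative (H : Type*) [AddGroup H] [AddAction H V] (cplx : Set (Finset V)) : Prop :=
  ∀ σ ∈ cplx, ∀ h : H, (∃ τ ∈ cplx, σ ⊆ τ ∧ h +ᵥ σ ⊆ τ) → h +ᵥ σ = σ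

section Translative

variable [AddGroup H] [AddAction H V] {cplx : Set (Finset V)}

theorem IsTranslative.stabilizer_anti (ht : IsTranslative H cplx) {ρ τ : Finset V}
    (hρ : ρ ∈ cplx) (hτ : τ ∈ cplx) (hρτ : ρ ⊆ τ) : stabilizer H τ ≤ stabilizer H ρ :=
  fun g hg => ht ρ hρ g ⟨τ, hτ, hρτ, (Finset.vadd_finset_subset_vadd_finset hρτ).trans_eq hg⟩

theorem IsTranslative.stabilizer_le_stabilizer_of_mem (ht : IsTranslative H cplx)
    {τ : Finset V} {v : V} (hτ : τ ∈ cplx) (hv : {v} ∈ cplx) (hvτ : v ∈ τ) :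
    stabilizer H τ ≤ stabilizer H v := by
  rw [← stabilizer_finset_singleton (G := H) v]
  exact ht.stabilizer_anti hv hτ (Finset.singleton_subset_iff.2 hvτ)

theorem IsTranslative.stabilizer_eq_bot_of_disjoint (ht : IsTranslative H cplx)
    {β : Finset V} {x y : V} (hβ : β ∈ cplx) (hx : β.erase x ∈ cplx) (hy : β.erase y ∈ cplx)
    (hxy : Disjoint (stabilizer H (β.erase x)) (stabilizer H (β.erase y))) :
    stabilizer H β = ⊥ :=
  le_bot_iff.1 <| hxy (ht.stabilizer_anti hx hβ (β.erase_subset x))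
    (ht.stabilizer_anti hy hβ (β.erase_subset y))

end Translative

theorem IsTranslative.stabilizer_eq_biSup_stabilizer_erase [AddCommGroup H] [AddAction H V]
    {cplx : Set (Finset V)} (ht : IsTranslative H cplx) {σ β : Finset V}
    (hfaces : ∀ τ ⊆ β, τ ∈ cplx) (hσβ : σ ⊆ β)
    (hgen : ⨆ x ∈ β, stabilizer H (β.erase x) = ⊤) (hfree : stabilizer H β = ⊥) :
    stabilizer H σ = ⨆ x ∈ β \ σ, stabilizer H (β.erase x) := by
  have hσ := hfaces σ hσβ
  have hvert : ∀ v ∈ β, {v} ∈ cplx := fun v hv => hfaces _ (Finset.singleton_subset_iff.2 hv)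
  have herase : ∀ x, β.erase x ∈ cplx := fun x => hfaces _ (β.erase_subset x)
  have hle : ⨆ x ∈ β \ σ, stabilizer H (β.erase x) ≤ stabilizer H σ :=
    iSup₂_le fun x hx => ht.stabilizer_anti hσ (herase x) fun v hv =>
      Finset.mem_erase.2 ⟨fun hvx => (Finset.mem_sdiff.1 hx).2 (hvx ▸ hv), hσβ hv⟩
  have hinf : stabilizer H σ ⊓ ⨆ x ∈ σ, stabilizer H (β.erase x) ≤ ⊥ := by
    rw [← hfree]
    refine le_trans (le_iInf₂ fun v hv => ?_) (iInf_stabilizer_le_stabilizer_finset β)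
    by_cases hvσ : v ∈ σ
    · exact inf_le_left.trans (ht.stabilizer_le_stabilizer_of_mem hσ (hvert v hv) hvσ)
    · refine inf_le_right.trans (iSup₂_le fun x hx => ?_)
      exact ht.stabilizer_le_stabilizer_of_mem (herase x) (hvert v hv)
        (Finset.mem_erase.2 ⟨fun hvx => hvσ (hvx ▸ hx), hv⟩)
  refine (eq_of_le_of_inf_le_of_sup_le hle (hinf.trans bot_le) ?_).symm
  rw [← Finset.iSup_union, Finset.sdiff_union_of_subset hσβ, hgen]
  exact le_top

end AddAction

theorem decoupled_stabilizer_decomposition_general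
    {H V : Type*} [AddCommGroup H] [AddAction H V] [DecidableEq V]
    (cplx : Set (Finset V)) (d : ℕ)
    (hdown : ∀ σ ∈ cplx, ∀ τ : Finset V, τ ⊆ σ → τ ∈ cplx)
    (htrans : ∀ σ ∈ cplx, ∀ h : H,
        (∃ τ ∈ cplx, σ ⊆ τ ∧ h +ᵥ σ ⊆ τ) → h +ᵥ σ = σ)
    (Hsub : Fin (d + 1) → AddSubgroup H)
    (hsup : (⨆ i, Hsub i) = ⊤)
    (hindep : ∀ i, Disjoint (Hsub i) (⨆ j ∈ ({i}ᶜ : Set (Fin (d + 1))), Hsub j))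
    (hdec : ∀ β ∈ cplx, β.card = d + 1 → ∃ e : Fin (d + 1) → V,
        Function.Injective e ∧ Finset.image e Finset.univ = β ∧
        ∀ i : Fin (d + 1), Hsub i = AddAction.stabilizer H (β.erase (e i)))
    (hdim0 : d = 0 → ∀ σ ∈ cplx, σ.Nonempty → ∀ h : H, h +ᵥ σ = σ → h = 0)
    (σ : Finset V)
    (β : Finset V) (hβ : β ∈ cplx) (hcard : β.card = d + 1) (hsub : σ ⊆ β) :
    (AddAction.stabilizer H σ =
        ⨆ x ∈ (β \ σ), AddAction.stabilizer H (β.erase x)) ∧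
    (∀ x ∈ β \ σ, Disjoint (AddAction.stabilizer H (β.erase x))
        (⨆ y ∈ (β \ σ).erase x, AddAction.stabilizer H (β.erase y))) := by
  have ht : AddAction.IsTranslative H cplx := htrans
  obtain ⟨e, -, himage, hstab⟩ := hdec β hβ hcard
  set K : V → AddSubgroup H := fun x => AddAction.stabilizer H (β.erase x)
  have hK : iSupIndep (K ∘ e) := (funext hstab : Hsub = K ∘ e) ▸ hindep
  have hβe : (β : Set V) ⊆ Set.range e := by simp [← himage]
  have hgen : ⨆ x ∈ β, K x = ⊤ := by
    rw [← himage, Finset.iSup_finset_image, ← hsup]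
    simp only [Finset.mem_univ, iSup_pos, hstab, K]
  have hfree : AddAction.stabilizer H β = ⊥ := by
    rcases d with _ | d
    · exact (AddSubgroup.eq_bot_iff_forall _).2 fun h hh =>
        hdim0 rfl β hβ (Finset.card_pos.1 (by omega)) h hh
    · exact ht.stabilizer_eq_bot_of_disjoint hβ (hdown β hβ _ (β.erase_subset _))
        (hdown β hβ _ (β.erase_subset _)) (hK.pairwiseDisjoint (i := 0) (j := 1) (by simp))
  refine ⟨ht.stabilizer_eq_biSup_stabilizer_erase (hdown β hβ) hsub hgen hfree,
    fun x hx => ?_⟩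
  obtain ⟨i, rfl⟩ := hβe (Finset.mem_sdiff.1 hx).1
  have hs : ((β \ σ).erase (e i) : Set V) ⊆ Set.range e :=
    (Finset.coe_subset.2 ((Finset.erase_subset _ _).trans Finset.sdiff_subset)).trans hβe
  exact hK.disjoint_biSup_of_subset_range hs (by simp)

/-- Let `H = ⊕_{i=0}^d H_i` act decoupled on a pure `d`-dimensional
simplicial complex `Σ`, let `σ ∈ Σ` and let `β` be a facet containing `σ`.  Then
`stab_H(σ) = ⊕_{x ∈ β∖σ} stab_H(β∖{x})` (the stabilizers on the right are independent
and their join is `stab_H(σ)`). -/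
theorem decoupled_stabilizer_decomposition
    {H V : Type*} [AddCommGroup H] [AddAction H V] [DecidableEq V]
    (cplx : Set (Finset V)) (d : ℕ)
    (hdown : ∀ σ ∈ cplx, ∀ τ : Finset V, τ ⊆ σ → τ ∈ cplx)
    (hinv : ∀ (h : H), ∀ σ ∈ cplx, h +ᵥ σ ∈ cplx)
    (hpure₁ : ∀ σ ∈ cplx, σ.card ≤ d + 1)
    (hpure₂ : ∀ σ ∈ cplx, ∃ β ∈ cplx, σ ⊆ β ∧ β.card = d + 1)
    (htrans : ∀ σ ∈ cplx, ∀ h : H,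
        (∃ τ ∈ cplx, σ ⊆ τ ∧ h +ᵥ σ ⊆ τ) → h +ᵥ σ = σ)
    (Hsub : Fin (d + 1) → AddSubgroup H)
    (hne : ∀ i, Hsub i ≠ ⊥)
    (hsup : (⨆ i, Hsub i) = ⊤)
    (hindep : ∀ i, Disjoint (Hsub i) (⨆ j ∈ ({i}ᶜ : Set (Fin (d + 1))), Hsub j))
    (hdec : ∀ β ∈ cplx, β.card = d + 1 → ∃ e : Fin (d + 1) → V,
        Function.Injective e ∧ Finset.image e Finset.univ = β ∧
        ∀ i : Fin (d + 1), Hsub i = AddAction.stabilizer H (β.erase (e i)))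
    (hdim0 : d = 0 → ∀ σ ∈ cplx, σ.Nonempty → ∀ h : H, h +ᵥ σ = σ → h = 0)
    (σ : Finset V) (hσ : σ ∈ cplx)
    (β : Finset V) (hβ : β ∈ cplx) (hcard : β.card = d + 1) (hsub : σ ⊆ β) :
    (AddAction.stabilizer H σ =
        ⨆ x ∈ (β \ σ), AddAction.stabilizer H (β.erase x)) ∧
    (∀ x ∈ β \ σ, Disjoint (AddAction.stabilizer H (β.erase x))
        (⨆ y ∈ (β \ σ).erase x, AddAction.stabilizer H (β.erase y))) :=
  decoupled_stabilizer_decomposition_general cplx d hdown htrans Hsub hsup hindep hdec hdim0 σ β hβ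
    hcard hsub
end

section
/- Let H be an abelian group with a decoupled action on a pure d-dimensional simplicial complex Σ, and fix σ ∈ Σ. Then the subcomplex Σ_{|Hσ} consisting of all faces contained in some translate gσ (g ∈ H) is a shellable simplicial complex. -/
open scoped Pointwise

/-- On a finite product of types with distinguished elements `z i`, there is a well-order
(lexicographic, with `z i` first in each coordinate) such that any `r`-related pair differs
at a coordinate `i` where the larger element is nonzero and zeroing it out decreases it. -/
lemma exists_shelling_order {ι : Type*} [LinearOrder ι] [Finite ι] {G : ι → Type*}
    (z : ∀ i, G i) :
    ∃ r : (∀ i, G i) → (∀ i, G i) → Prop, IsWellOrder (∀ i, G i) r ∧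
      ∀ a b, r a b → ∃ i, a i ≠ b i ∧ b i ≠ z i ∧ r (Function.update b i (z i)) b := by
  classical
  let s : ∀ i, G i → G i → Prop := fun i x y =>
    (x = z i ∧ y ≠ z i) ∨ (x ≠ z i ∧ y ≠ z i ∧ WellOrderingRel x y)
  have hwor : ∀ i, IsWellOrder (G i) WellOrderingRel := fun i => WellOrderingRel.isWellOrder
  have hs_irrefl : ∀ i (x : G i), ¬ s i x x := by
    intro i x h
    rcases h with ⟨h1, h2⟩ | ⟨h1, h2, h3⟩
    · exact h2 h1
    · exact ((hwor i).wf.isIrrefl).irrefl x h3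
  have hs_notbot : ∀ i (x y : G i), s i x y → y ≠ z i := by
    intro i x y h; rcases h with ⟨_, h2⟩ | ⟨_, h2, _⟩ <;> exact h2
  have hs_bot : ∀ i (y : G i), y ≠ z i → s i (z i) y := fun i y hy => Or.inl ⟨rfl, hy⟩
  have hs_trans : ∀ i (x y w : G i), s i x y → s i y w → s i x w := by
    intro i x y w hxy hyw
    rcases hxy with ⟨h1, h2⟩ | ⟨h1, h2, h3⟩ <;>
      rcases hyw with ⟨h4, h5⟩ | ⟨h4, h5, h6⟩
    · exact absurd h4 h2
    · exact Or.inl ⟨h1, h5⟩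
    · exact absurd h4 h2
    · exact Or.inr ⟨h1, h5, (haveI := hwor i; IsTrans.trans _ _ _ h3 h6)⟩
  have hs_tricho : ∀ i (x y : G i), s i x y ∨ x = y ∨ s i y x := by
    intro i x y
    by_cases hx : x = z i
    · by_cases hy : y = z i
      · exact Or.inr (Or.inl (hx.trans hy.symm))
      · exact Or.inl (Or.inl ⟨hx, hy⟩)
    · by_cases hy : y = z i
      · exact Or.inr (Or.inr (Or.inl ⟨hy, hx⟩))
      · rcases (haveI := hwor i; trichotomous_of WellOrderingRel x y) with h | h | h
        · exact Or.inl (Or.inr ⟨hx, hy, h⟩)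
        · exact Or.inr (Or.inl h)
        · exact Or.inr (Or.inr (Or.inr ⟨hy, hx, h⟩))
  have hs_wf : ∀ i, WellFounded (s i) := by
    intro i
    have accz : Acc (s i) (z i) :=
      Acc.intro _ (fun y hy => absurd rfl (hs_notbot i y (z i) hy))
    have main : ∀ x : G i, Acc WellOrderingRel x → Acc (s i) x := by
      intro x hx
      induction hx with
      | intro x _ ih =>
        refine Acc.intro x (fun y hy => ?_)
        rcases hy with ⟨h1, _⟩ | ⟨_, _, h3⟩
        · exact h1 ▸ accz
        · exact ih y h3
    exact ⟨fun x => main x ((hwor i).wf.apply x)⟩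
  refine ⟨Pi.Lex (· < ·) (fun {i} => s i), ?_, ?_⟩
  · haveI : ∀ i, IsTrichotomous (G i) (s i) := fun i => ⟨fun x y h1 h2 => ((hs_tricho i x y).resolve_left h1).resolve_right h2⟩
    have hwfι : WellFounded ((· < ·) : ι → ι → Prop) :=
      (Finite.to_wellFoundedLT (α := ι)).wf
    refine { trichotomous := ?_, wf := ?_ }
    · exact Pi.Lex.wellFounded (· < ·) hs_wf
    · exact (Pi.isTrichotomous_lex (· < ·) (fun {i} => s i) hwfι).trichotomous
  · rintro a b ⟨i, hji, hi⟩
    refine ⟨i, ?_, hs_notbot i _ _ hi, ?_⟩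
    · intro h; rw [h] at hi; exact hs_irrefl i _ hi
    · refine ⟨i, fun j hj => Function.update_of_ne (ne_of_lt hj) _ _, ?_⟩
      rw [Function.update_self]
      exact hs_bot i _ (hs_notbot i _ _ hi)

set_option maxHeartbeats 1000000 in
/-- Let `H` be an abelian group with a decoupled action on a pure
`d`-dimensional simplicial complex `Σ` and fix a face `σ ∈ Σ`.  Then the orbit
subcomplex `Σ_{|Hσ} = {τ ∈ Σ : τ ⊆ h +ᵥ σ for some h}` is shellable: its facets (the
translates of `σ`) admit a well-ordering `lt` such that for any facets `m₁ lt m₂` there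
are a facet `m₃ lt m₂` and a vertex `x ∈ m₂` with
`m₁ ∩ m₂ ⊆ m₃ ∩ m₂ = m₂ ∖ {x}`. -/
theorem decoupled_orbit_complex_shellable
    {H V : Type*} [AddCommGroup H] [AddAction H V] [DecidableEq V]
    (cplx : Set (Finset V)) (d : ℕ)
    (hdown : ∀ σ ∈ cplx, ∀ τ : Finset V, τ ⊆ σ → τ ∈ cplx)
    (hinv : ∀ (h : H), ∀ σ ∈ cplx, h +ᵥ σ ∈ cplx)
    (hpure₁ : ∀ σ ∈ cplx, σ.card ≤ d + 1)
    (hpure₂ : ∀ σ ∈ cplx, ∃ β ∈ cplx, σ ⊆ β ∧ β.card = d + 1)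
    (htrans : ∀ σ ∈ cplx, ∀ h : H,
        (∃ τ ∈ cplx, σ ⊆ τ ∧ h +ᵥ σ ⊆ τ) → h +ᵥ σ = σ)
    (Hsub : Fin (d + 1) → AddSubgroup H)
    (hne : ∀ i, Hsub i ≠ ⊥)
    (hsup : (⨆ i, Hsub i) = ⊤)
    (hindep : ∀ i, Disjoint (Hsub i) (⨆ j ∈ ({i}ᶜ : Set (Fin (d + 1))), Hsub j))
    (hdec : ∀ β ∈ cplx, β.card = d + 1 → ∃ e : Fin (d + 1) → V,
        Function.Injective e ∧ Finset.image e Finset.univ = β ∧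
        ∀ i : Fin (d + 1), Hsub i = AddAction.stabilizer H (β.erase (e i)))
    (hdim0 : d = 0 → ∀ σ ∈ cplx, σ.Nonempty → ∀ h : H, h +ᵥ σ = σ → h = 0)
    (σ : Finset V) (hσ : σ ∈ cplx) :
    ∃ lt : {τ : Finset V // ∃ h : H, τ = h +ᵥ σ} →
        {τ : Finset V // ∃ h : H, τ = h +ᵥ σ} → Prop,
      IsWellOrder {τ : Finset V // ∃ h : H, τ = h +ᵥ σ} lt ∧
      ∀ m₁ m₂ : {τ : Finset V // ∃ h : H, τ = h +ᵥ σ}, lt m₁ m₂ →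
        ∃ m₃ : {τ : Finset V // ∃ h : H, τ = h +ᵥ σ}, lt m₃ m₂ ∧
          ∃ x ∈ m₂.1, m₁.1 ∩ m₂.1 ⊆ m₃.1 ∩ m₂.1 ∧ m₃.1 ∩ m₂.1 = m₂.1.erase x := by
  classical
  obtain ⟨β, hβ, hσβ, hβcard⟩ := hpure₂ σ hσ
  obtain ⟨e, he_inj, he_img, he_stab⟩ := hdec β hβ hβcard
  have heβ : ∀ i, e i ∈ β := by
    intro i; rw [← he_img]; exact Finset.mem_image_of_mem e (Finset.mem_univ i)
  have hβe : ∀ x ∈ β, ∃ i, e i = x := by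
    intro x hx; rw [← he_img] at hx
    obtain ⟨i, _, hi⟩ := Finset.mem_image.mp hx; exact ⟨i, hi⟩
  -- singleton rigidity
  have hsing : ∀ (h : H) (x : V), x ∈ β → h +ᵥ x ∈ β → h +ᵥ x = x := by
    intro h x hx hmem
    have h1 : ({x} : Finset V) ∈ cplx :=
      hdown β hβ {x} (Finset.singleton_subset_iff.mpr hx)
    have h2 : h +ᵥ ({x} : Finset V) = {x} := by
      refine htrans {x} h1 h ⟨β, hβ, Finset.singleton_subset_iff.mpr hx, ?_⟩
      rw [Finset.vadd_finset_singleton]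
      exact Finset.singleton_subset_iff.mpr hmem
    rw [Finset.vadd_finset_singleton] at h2
    exact Finset.singleton_injective h2
  -- elements of `Hsub i` fix the rest of `β` pointwise
  have hfix : ∀ (i : Fin (d + 1)) (h : H), h ∈ Hsub i → ∀ j, j ≠ i → h +ᵥ e j = e j := by
    intro i h hh j hji
    have hst : h +ᵥ β.erase (e i) = β.erase (e i) :=
      AddAction.mem_stabilizer_iff.mp (he_stab i ▸ hh)
    have hjmem : e j ∈ β.erase (e i) :=
      Finset.mem_erase.mpr ⟨fun heq => hji (he_inj heq), heβ j⟩
    have : h +ᵥ e j ∈ β.erase (e i) := by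
      rw [← hst]; exact Finset.vadd_mem_vadd_finset hjmem
    exact hsing h (e j) (heβ j) (Finset.mem_of_mem_erase this)
  have himg_fix : ∀ (g : H) (t : Finset V), (∀ x ∈ t, g +ᵥ x = x) → g +ᵥ t = t := by
    intro g t ht
    rw [Finset.vadd_finset_def, Finset.image_congr (g := id) (fun x hx => ht x hx),
      Finset.image_id]
  -- elements of `Hsub i` fixing also `e i` are trivial
  have hkill : ∀ (i : Fin (d + 1)) (h : H), h ∈ Hsub i → h +ᵥ e i = e i → h = 0 := by
    intro i h hh hfixi
    have hall : ∀ j, h +ᵥ e j = e j := by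
      intro j
      by_cases hji : j = i
      · rw [hji]; exact hfixi
      · exact hfix i h hh j hji
    have hβfix : ∀ x ∈ β, h +ᵥ x = x := by
      intro x hx; obtain ⟨j, rfl⟩ := hβe x hx; exact hall j
    rcases Nat.eq_zero_or_pos d with hd | hd
    · have hβne : β.Nonempty := Finset.card_pos.mp (by omega)
      exact hdim0 hd β hβ hβne h (himg_fix h β hβfix)
    · have : Nontrivial (Fin (d + 1)) := Fin.nontrivial_iff_two_le.mpr (by omega)
      obtain ⟨k, hk⟩ := exists_ne i
      have hmemk : h ∈ Hsub k := by
        rw [he_stab k, AddAction.mem_stabilizer_iff]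
        exact himg_fix h _ (fun x hx => hβfix x (Finset.mem_of_mem_erase hx))
      have hle : Hsub k ≤ ⨆ j ∈ ({i}ᶜ : Set (Fin (d + 1))), Hsub j :=
        le_biSup Hsub (Set.mem_compl_singleton_iff.mpr hk)
      exact AddSubgroup.disjoint_def.mp (hindep i) hh (hle hmemk)
  -- main rigidity lemma
  have hF : ∀ (j k : Fin (d + 1)) (g₁ g₂ : H), g₁ ∈ Hsub j → g₂ ∈ Hsub k →
      g₁ +ᵥ e j = g₂ +ᵥ e k → j = k ∧ g₁ = g₂ := by
    intro j k g₁ g₂ hg₁ hg₂ heq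
    have key : (-g₂ + g₁) +ᵥ e j = e k := by
      rw [add_vadd, heq, neg_vadd_vadd]
    have hfixed : (-g₂ + g₁) +ᵥ e j = e j :=
      hsing _ (e j) (heβ j) (key ▸ heβ k)
    have hjk : j = k := he_inj (hfixed ▸ key)
    subst hjk
    have hmem : -g₂ + g₁ ∈ Hsub j := (Hsub j).add_mem ((Hsub j).neg_mem hg₂) hg₁
    have h0 : -g₂ + g₁ = 0 := hkill j _ hmem hfixed
    exact ⟨rfl, (neg_add_eq_zero.mp h0).symm⟩
  -- sums of components act coordinatewise
  have hfixsum : ∀ (t : Finset (Fin (d + 1))) (c : Fin (d + 1) → H),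
      (∀ i, c i ∈ Hsub i) → ∀ j ∉ t, (∑ i ∈ t, c i) +ᵥ e j = e j := by
    intro t
    induction t using Finset.induction_on with
    | empty => intro c hc j _; simp
    | @insert a t ha ih =>
      intro c hc j hj
      rw [Finset.sum_insert ha, add_vadd, ih c hc j (fun h => hj (Finset.mem_insert_of_mem h))]
      exact hfix a (c a) (hc a) j (fun h => hj (h ▸ Finset.mem_insert_self a t))
  have hptc : ∀ (c : Fin (d + 1) → H), (∀ i, c i ∈ Hsub i) → ∀ j,
      (∑ i, c i) +ᵥ e j = c j +ᵥ e j := by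
    intro c hc j
    rw [← Finset.add_sum_erase Finset.univ c (Finset.mem_univ j), add_vadd,
      hfixsum _ c hc j (Finset.notMem_erase j _)]
  -- the index set of σ inside β
  set S : Finset (Fin (d + 1)) := Finset.univ.filter (fun i => e i ∈ σ) with hS
  have hmemS : ∀ i, i ∈ S ↔ e i ∈ σ := by
    intro i; rw [hS, Finset.mem_filter]; simp
  have hσS : σ = S.image e := by
    ext x
    constructor
    · intro hx
      obtain ⟨i, rfl⟩ := hβe x (hσβ hx)
      exact Finset.mem_image_of_mem e ((hmemS i).mpr hx)
    · intro hx
      obtain ⟨i, hiS, rfl⟩ := Finset.mem_image.mp hx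
      exact (hmemS i).mp hiS
  -- the parameter space
  set M := {τ : Finset V // ∃ h : H, τ = h +ᵥ σ} with hM
  let T := ∀ i : {i : Fin (d + 1) // i ∈ S}, ↥(Hsub i.1)
  let ext : T → Fin (d + 1) → H := fun a j => if hj : j ∈ S then (a ⟨j, hj⟩ : H) else 0
  have hext : ∀ (a : T) (j), ext a j ∈ Hsub j := by
    intro a j
    by_cases hj : j ∈ S
    · simp only [ext, dif_pos hj]; exact (a ⟨j, hj⟩).2
    · simp only [ext, dif_neg hj]; exact (Hsub j).zero_mem
  let Sum : T → H := fun a => ∑ i, ext a i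
  have hvadd_pt : ∀ (a : T) (j : Fin (d + 1)) (hj : j ∈ S),
      Sum a +ᵥ e j = (a ⟨j, hj⟩ : H) +ᵥ e j := by
    intro a j hj
    rw [show Sum a = ∑ i, ext a i from rfl, hptc (ext a) (hext a) j]
    congr 1
    exact dif_pos hj
  let φ : T → Finset V := fun a => Sum a +ᵥ σ
  let φ' : T → M := fun a => ⟨φ a, Sum a, rfl⟩
  have hφmem : ∀ (a : T) (y : V), y ∈ φ a ↔ ∃ i : {i : Fin (d + 1) // i ∈ S},
      y = (a i : H) +ᵥ e i.1 := by
    intro a y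
    constructor
    · intro hy
      rw [show φ a = Sum a +ᵥ σ from rfl, Finset.mem_vadd_finset] at hy
      obtain ⟨x, hxσ, rfl⟩ := hy
      obtain ⟨j, hjS, rfl⟩ : ∃ j, j ∈ S ∧ e j = x := by
        rw [hσS] at hxσ
        obtain ⟨j, hj, hj2⟩ := Finset.mem_image.mp hxσ
        exact ⟨j, hj, hj2⟩
      exact ⟨⟨j, hjS⟩, hvadd_pt a j hjS⟩
    · rintro ⟨i, rfl⟩
      rw [show φ a = Sum a +ᵥ σ from rfl, Finset.mem_vadd_finset]
      exact ⟨e i.1, (hmemS i.1).mp i.2, (hvadd_pt a i.1 i.2)⟩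
  have hinj : Function.Injective φ' := by
    intro a b hab
    have h1 : φ a = φ b := congrArg Subtype.val hab
    funext i
    have hmem : (a i : H) +ᵥ e i.1 ∈ φ a := (hφmem a _).mpr ⟨i, rfl⟩
    rw [h1] at hmem
    obtain ⟨k, hk⟩ := (hφmem b _).mp hmem
    obtain ⟨hik, hval⟩ := hF i.1 k.1 _ _ (a i).2 (b k).2 hk
    have hik' : i = k := Subtype.ext hik
    subst hik'
    exact SetLike.coe_eq_coe.mp hval
  have hsurj : Function.Surjective φ' := by
    rintro ⟨τ, h, rfl⟩
    have hmem : h ∈ (⊤ : AddSubgroup H) := AddSubgroup.mem_top h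
    rw [← hsup] at hmem
    have hdecomp : ∃ c : Fin (d + 1) → H, (∀ i, c i ∈ Hsub i) ∧ ∑ i, c i = h := by
      refine AddSubgroup.iSup_induction
        (C := fun x => ∃ c : Fin (d + 1) → H, (∀ i, c i ∈ Hsub i) ∧ ∑ i, c i = x)
        Hsub hmem ?_ ?_ ?_
      · intro i x hx
        refine ⟨fun j => if j = i then x else 0, ?_, ?_⟩
        · intro j
          by_cases hji : j = i
          · subst hji; simpa using hx
          · simpa [hji] using (Hsub j).zero_mem
        · simp
      · exact ⟨0, fun i => (Hsub i).zero_mem, by simp⟩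
      · rintro x y ⟨c₁, hc₁, rfl⟩ ⟨c₂, hc₂, rfl⟩
        exact ⟨c₁ + c₂, fun i => (Hsub i).add_mem (hc₁ i) (hc₂ i),
          by simp [Finset.sum_add_distrib]⟩
    obtain ⟨c, hc, hsum⟩ := hdecomp
    set a : T := fun i => ⟨c i.1, hc i.1⟩ with haT
    have hkey : ∀ x ∈ (σ : Set V), Sum a +ᵥ x = h +ᵥ x := by
      intro x hx
      obtain ⟨j, hjS, rfl⟩ : ∃ j, j ∈ S ∧ e j = x := by
        have hx' : x ∈ σ := hx
        rw [hσS] at hx'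
        obtain ⟨j, hj, hj2⟩ := Finset.mem_image.mp hx'
        exact ⟨j, hj, hj2⟩
      rw [hvadd_pt a j hjS]
      have h1 : (a ⟨j, hjS⟩ : H) = c j := rfl
      rw [h1, ← hsum, hptc c hc j]
    refine ⟨a, Subtype.ext ?_⟩
    show Sum a +ᵥ σ = h +ᵥ σ
    rw [Finset.vadd_finset_def, Finset.vadd_finset_def]
    exact Finset.image_congr hkey
  let E : T ≃ M := Equiv.ofBijective φ' ⟨hinj, hsurj⟩
  obtain ⟨r, hwo, hstep⟩ := exists_shelling_order
    (G := fun i : {i : Fin (d + 1) // i ∈ S} => ↥(Hsub i.1)) (fun _ => 0)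
  refine ⟨fun m₁ m₂ => r (E.symm m₁) (E.symm m₂), ?_, ?_⟩
  · refine { trichotomous := ?_, wf := ?_ }
    · exact InvImage.wf _ hwo.wf
    · intro m₁ m₂ h₁ h₂
      exact E.symm.injective (hwo.trichotomous (E.symm m₁) (E.symm m₂) h₁ h₂)
  · intro m₁ m₂ hlt
    set a := E.symm m₁ with ha
    set b := E.symm m₂ with hb
    obtain ⟨i, hab, hbz, hup⟩ := hstep a b hlt
    set cT : T := Function.update b i 0 with hcT
    have hm1 : m₁.1 = φ a := by
      have h1 : φ' a = m₁ := by rw [ha]; exact E.apply_symm_apply m₁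
      exact (congrArg Subtype.val h1).symm
    have hm2 : m₂.1 = φ b := by
      have h1 : φ' b = m₂ := by rw [hb]; exact E.apply_symm_apply m₂
      exact (congrArg Subtype.val h1).symm
    have hm3 : (E cT).1 = φ cT := rfl
    refine ⟨E cT, ?_, ?_⟩
    · show r (E.symm (E cT)) b
      rw [Equiv.symm_apply_apply, hcT]
      convert hup using 2
    · refine ⟨(b i : H) +ᵥ e i.1, ?_, ?_, ?_⟩
      · rw [hm2]; exact (hφmem b _).mpr ⟨i, rfl⟩
      · intro y hy
        rw [Finset.mem_inter] at hy
        obtain ⟨hy1, hy2⟩ := hy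
        rw [hm1] at hy1
        have hy2' := hy2
        rw [hm2] at hy2'
        obtain ⟨j, rfl⟩ := (hφmem a _).mp hy1
        obtain ⟨k, hk⟩ := (hφmem b _).mp hy2'
        obtain ⟨hjk, hval⟩ := hF j.1 k.1 _ _ (a j).2 (b k).2 hk
        have hjk' : j = k := Subtype.ext hjk
        subst hjk'
        have hji : j ≠ i := by
          rintro rfl
          exact hab (SetLike.coe_eq_coe.mp hval)
        refine Finset.mem_inter.mpr ⟨?_, hy2⟩
        rw [hm3]
        refine (hφmem cT _).mpr ⟨j, ?_⟩
        rw [show (cT j : H) = (b j : H) from by rw [hcT, Function.update_of_ne hji], ← hval]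
      · rw [hm3, hm2]
        ext y
        simp only [Finset.mem_inter, Finset.mem_erase]
        constructor
        · rintro ⟨hy3, hy2⟩
          refine ⟨?_, hy2⟩
          obtain ⟨k, rfl⟩ := (hφmem cT _).mp hy3
          intro hx
          obtain ⟨hki, hv⟩ := hF k.1 i.1 _ _ (cT k).2 (b i).2 hx
          have hki' : k = i := Subtype.ext hki
          subst hki'
          have hz : (cT k : H) = 0 := by rw [hcT, Function.update_self]; rfl
          rw [hz] at hv
          exact hbz (SetLike.coe_eq_coe.mp hv.symm)
        · rintro ⟨hyx, hy2⟩
          refine ⟨?_, hy2⟩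
          obtain ⟨k, rfl⟩ := (hφmem b _).mp hy2
          have hki : k ≠ i := by rintro rfl; exact hyx rfl
          refine (hφmem cT _).mpr ⟨k, ?_⟩
          rw [show (cT k : H) = (b k : H) from by rw [hcT, Function.update_of_ne hki]]
end

section
/- Let 𝔖 be a translative G-semimatroid of rank d. Then the h-polynomial of the finite simplicial poset I_𝔖 of orbits of independent sets satisfies h_{I_𝔖}(t) = t^d · T_𝔖(1/t, 1), where T_𝔖 is the Tutte polynomial of the action. -/
/-!
Both sides are sums over the finitely many orbits of central sets. Regrouping the `h`-polynomial
by orbits gives `∑ ((1 - t) / t) ^ (d - |X|)` over the independent orbits `G • X`. On the Tutte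
side, the evaluation at `y = 1` turns `(y - 1) ^ (|A| - ρ̲(A))` into the indicator of
`ρ̲(A) = |A|`; translativity says that distinct elements of a central set lie in distinct
`G`-orbits, so the support `A` of `G • X` has `|A| = |X|` and this is again the indicator of the
independence of `X`.
-/

attribute [local instance] Classical.propDecidable

/-- A (finite-rank) semimatroid on a ground set `S`: a simplicial complex `K` of
"central" finite subsets of `S` together with a rank function `ρ` satisfying the
semimatroid axioms of Ardila and Kawahara. -/
structure Semimatroid (S : Type*) [DecidableEq S] where
  K : Set (Finset S)
  ρ : Finset S → ℕ
  empty_mem : ∅ ∈ K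
  down : ∀ ⦃X Y : Finset S⦄, X ∈ K → Y ⊆ X → Y ∈ K
  rank_le_card : ∀ X ∈ K, ρ X ≤ X.card
  mono : ∀ ⦃X Y : Finset S⦄, Y ∈ K → X ⊆ Y → ρ X ≤ ρ Y
  submodular : ∀ ⦃X Y : Finset S⦄, X ∈ K → Y ∈ K → X ∪ Y ∈ K →
    ρ (X ∪ Y) + ρ (X ∩ Y) ≤ ρ X + ρ Y
  cr1 : ∀ ⦃X Y : Finset S⦄, X ∈ K → Y ∈ K → ρ X = ρ (X ∩ Y) → X ∪ Y ∈ K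
  cr2 : ∀ ⦃X Y : Finset S⦄, X ∈ K → Y ∈ K → ρ X < ρ Y →
    ∃ y ∈ Y, y ∉ X ∧ insert y X ∈ K

/-- The `G`-orbit of a central set `X`, as a set of finite subsets of `S`. -/
def orbSet (G : Type*) {S : Type*} [DecidableEq S] [Group G] [MulAction G S]
    (X : Finset S) : Set (Finset S) :=
  {Y | ∃ g : G, Y = X.image (fun s => g • s)}

/-- The number of `G`-orbits of central sets of a semimatroid satisfying a given
predicate (invariant on orbits). -/
noncomputable def numOrbits (G : Type*) {S : Type*} [DecidableEq S] [Group G]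
    [MulAction G S] (M : Semimatroid S) (pred : Finset S → Prop) : ℕ :=
  Set.ncard {O : Set (Finset S) | ∃ X : Finset S, X ∈ M.K ∧ pred X ∧ O = orbSet G X}

open Finset

namespace Semimatroid

variable {S : Type*} [DecidableEq S]

def IsOrbitInvariant (G : Type*) [Group G] [MulAction G S] {β : Sort*} (M : Semimatroid S)
    (φ : Finset S → β) : Prop :=
  ∀ (g : G), ∀ X ∈ M.K, φ (X.image (g • ·)) = φ X

noncomputable def orbitRep (G : Type*) [Group G] [MulAction G S] (M : Semimatroid S)
    (O : Set (Finset S)) : Finset S :=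
  if h : ∃ X ∈ M.K, O = orbSet G X then h.choose else ∅

variable {G : Type*} [Group G] [MulAction G S] {M : Semimatroid S}

lemma orbitRep_mem_K {O : Set (Finset S)} (h : ∃ X ∈ M.K, O = orbSet G X) :
    orbitRep G M O ∈ M.K := by
  rw [orbitRep, dif_pos h]
  exact h.choose_spec.1

lemma orbSet_orbitRep {O : Set (Finset S)} (h : ∃ X ∈ M.K, O = orbSet G X) :
    orbSet G (orbitRep G M O) = O := by
  rw [orbitRep, dif_pos h]
  exact h.choose_spec.2.symm

lemma IsOrbitInvariant.apply_orbitRep {β : Sort*} {φ : Finset S → β}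
    (hφ : IsOrbitInvariant G M φ) {X : Finset S} (hX : X ∈ M.K) :
    φ (orbitRep G M (orbSet G X)) = φ X := by
  have hrep : ∃ Y ∈ M.K, orbSet G X = orbSet G Y := ⟨X, hX, rfl⟩
  have hXmem : X ∈ orbSet G (orbitRep G M (orbSet G X)) := by
    rw [orbSet_orbitRep hrep]
    exact ⟨1, by simp⟩
  obtain ⟨g, hg⟩ := hXmem
  have hinv := hφ g _ (orbitRep_mem_K hrep)
  rwa [← hg, eq_comm] at hinv

lemma IsOrbitInvariant.eq {β : Type*} {φ ψ : Finset S → β}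
    (hφ : IsOrbitInvariant G M φ) (hψ : IsOrbitInvariant G M ψ) :
    IsOrbitInvariant G M (fun X => φ X = ψ X) := fun g X hX => by
  simp only [hφ g X hX, hψ g X hX]

lemma IsOrbitInvariant.and_eq {β : Type*} {P : Finset S → Prop} {κ : Finset S → β}
    (hP : IsOrbitInvariant G M P) (hκ : IsOrbitInvariant G M κ) (b : β) :
    IsOrbitInvariant G M (fun X => P X ∧ κ X = b) := fun g X hX => by
  simp only [hP g X hX, hκ g X hX]

lemma isOrbitInvariant_card : IsOrbitInvariant G M (fun X : Finset S => X.card) :=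
  fun g X _ => card_image_of_injective X (MulAction.injective g)

lemma isOrbitInvariant_image_mk :
    IsOrbitInvariant G M (fun X : Finset S => X.image (Quotient.mk (MulAction.orbitRel G S))) :=
  fun g X _ => by
    dsimp only
    rw [image_image]
    exact image_congr fun s _ => Quotient.sound (MulAction.mem_orbit s g)

lemma numOrbits_eq_card_filter
    (hfin : Set.Finite {O : Set (Finset S) | ∃ X ∈ M.K, O = orbSet G X})
    {P : Finset S → Prop} [DecidablePred P] (hP : IsOrbitInvariant G M P) :
    numOrbits G M P = #{O ∈ hfin.toFinset | P (orbitRep G M O)} := by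
  rw [numOrbits, ← Set.ncard_coe_finset]
  congr 1
  ext O
  simp only [Set.mem_ofPred_eq, coe_filter, Set.Finite.mem_toFinset]
  constructor
  · rintro ⟨X, hX, hPX, rfl⟩
    exact ⟨⟨X, hX, rfl⟩, (hP.apply_orbitRep hX).symm ▸ hPX⟩
  · rintro ⟨hO, hPO⟩
    exact ⟨orbitRep G M O, orbitRep_mem_K hO, hPO, (orbSet_orbitRep hO).symm⟩

lemma sum_numOrbits_and_eq_mul {R β : Type*} [CommSemiring R] [DecidableEq β]
    (hfin : Set.Finite {O : Set (Finset S) | ∃ X ∈ M.K, O = orbSet G X})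
    {P : Finset S → Prop} [DecidablePred P] {κ : Finset S → β}
    (hP : IsOrbitInvariant G M P) (hκ : IsOrbitInvariant G M κ)
    (B : Finset β) (hB : ∀ X ∈ M.K, P X → κ X ∈ B) (w : β → R) :
    ∑ b ∈ B, (numOrbits G M (fun X => P X ∧ κ X = b) : R) * w b =
      ∑ O ∈ hfin.toFinset with P (orbitRep G M O), w (κ (orbitRep G M O)) := by
  have hmaps : ∀ O ∈ hfin.toFinset.filter (fun O => P (orbitRep G M O)),
      κ (orbitRep G M O) ∈ B := by
    intro O hO
    rw [mem_filter, Set.Finite.mem_toFinset] at hO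
    exact hB _ (orbitRep_mem_K hO.1) hO.2
  rw [← sum_fiberwise_of_maps_to hmaps]
  refine sum_congr rfl fun b _ => ?_
  rw [numOrbits_eq_card_filter hfin (hP.and_eq hκ b), filter_filter,
    sum_congr rfl fun O hO => congrArg w (mem_filter.1 hO).2.2, sum_const, nsmul_eq_mul]

lemma sum_numOrbits_eq_mul {R β : Type*} [CommSemiring R] [DecidableEq β] [Fintype β]
    (hfin : Set.Finite {O : Set (Finset S) | ∃ X ∈ M.K, O = orbSet G X})
    {κ : Finset S → β} (hκ : IsOrbitInvariant G M κ) (w : β → R) :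
    ∑ b, (numOrbits G M (fun X => κ X = b) : R) * w b =
      ∑ O ∈ hfin.toFinset, w (κ (orbitRep G M O)) := by
  simpa only [true_and, filter_true] using
    sum_numOrbits_and_eq_mul hfin (P := fun _ => True) (fun _ _ _ => rfl) hκ univ
      (fun _ _ _ => mem_univ _) w

lemma card_image_mk_of_translative
    (htrans : ∀ (s : S) (g : G), ({s, g • s} : Finset S) ∈ M.K → g • s = s)
    {X : Finset S} (hX : X ∈ M.K) :
    (X.image (Quotient.mk (MulAction.orbitRel G S))).card = X.card := by
  refine card_image_of_injOn fun s hs s' hs' hss' => ?_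
  obtain ⟨g, rfl⟩ := MulAction.mem_orbit_iff.mp (Quotient.exact hss')
  have hpair : ({s', g • s'} : Finset S) ⊆ X :=
    insert_subset_iff.2 ⟨hs', singleton_subset_iff.2 hs⟩
  exact htrans s' g (M.down hX hpair)

lemma zero_pow_card_sub_rank {R : Type*} [MonoidWithZero R] {X : Finset S} (hX : X ∈ M.K) :
    (0 : R) ^ (X.card - M.ρ X) = if M.ρ X = X.card then 1 else 0 := by
  have hle := M.rank_le_card X hX
  split_ifs with h
  · rw [h, Nat.sub_self, pow_zero]
  · exact zero_pow (by omega)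

end Semimatroid

open Semimatroid in
theorem h_polynomial_eq_Tutte_evaluation_general
    {S G : Type*} [DecidableEq S] [Group G] [MulAction G S]
    [Fintype (Quotient (MulAction.orbitRel G S))]
    (M : Semimatroid S)
    (hρinv : ∀ (g : G), ∀ X ∈ M.K, M.ρ (X.image (fun s => g • s)) = M.ρ X)
    (hfin : Set.Finite {O : Set (Finset S) | ∃ X ∈ M.K, O = orbSet G X})
    (htrans : ∀ (s : S) (g : G), ({s, g • s} : Finset S) ∈ M.K → g • s = s)
    (d : ℕ) (hd : ∀ X ∈ M.K, M.ρ X ≤ d)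
    (ρ' : Finset (Quotient (MulAction.orbitRel G S)) → ℕ)
    (hρ' : ∀ X ∈ M.K, ρ' (X.image (Quotient.mk (MulAction.orbitRel G S))) = M.ρ X)
    (t : ℚ) (ht : t ≠ 0) :
    t ^ d * ∑ i ∈ Finset.range (d + 1),
        (numOrbits G M (fun X => M.ρ X = X.card ∧ X.card = i) : ℚ) *
          ((1 - t) / t) ^ (d - i) =
    t ^ d * ∑ A : Finset (Quotient (MulAction.orbitRel G S)),
        (numOrbits G M
            (fun X => X.image (Quotient.mk (MulAction.orbitRel G S)) = A) : ℚ) *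
          (1 / t - 1) ^ (d - ρ' A) * ((1 : ℚ) - 1) ^ (A.card - ρ' A) := by
  have hρ : IsOrbitInvariant G M M.ρ := hρinv
  have hrepK : ∀ O ∈ hfin.toFinset, orbitRep G M O ∈ M.K := fun O hO =>
    orbitRep_mem_K ((Set.Finite.mem_toFinset hfin).1 hO)
  rw [sum_numOrbits_and_eq_mul hfin (hρ.eq isOrbitInvariant_card) isOrbitInvariant_card _
    (fun X hX hX' => mem_range_succ_iff.2 (hX' ▸ hd X hX))]
  simp only [mul_assoc]
  rw [sum_numOrbits_eq_mul hfin isOrbitInvariant_image_mk, sum_filter]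
  congr 1
  refine sum_congr rfl fun O hO => ?_
  rw [hρ' _ (hrepK O hO), card_image_mk_of_translative htrans (hrepK O hO), sub_self,
    zero_pow_card_sub_rank (hrepK O hO)]
  split_ifs with h
  · rw [h, mul_one, div_sub_one ht]
  · rw [mul_zero]

/-- Let `𝔖 : G ↻ S` be a translative `G`-semimatroid of rank `d`.
Then the `h`-polynomial of the finite simplicial poset `I_𝔖` of orbits of independent
sets satisfies `h_{I_𝔖}(t) = t^d · T_𝔖(1/t, 1)`, where
`T_𝔖(x,y) = Σ_{A ⊆ E_𝔖} m_𝔖(A) (x−1)^{d−ρ̲(A)} (y−1)^{|A|−ρ̲(A)}` is the Tutte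
polynomial of the action (`E_𝔖 = S/G`, `m_𝔖(A)` the number of orbits of central sets
with support `A`, and `ρ̲(A)` their common rank). -/
theorem h_polynomial_eq_Tutte_evaluation
    {S G : Type*} [DecidableEq S] [Group G] [MulAction G S]
    [Fintype (Quotient (MulAction.orbitRel G S))]
    (M : Semimatroid S)
    (hK : ∀ (g : G), ∀ X ∈ M.K, X.image (fun s => g • s) ∈ M.K)
    (hρinv : ∀ (g : G), ∀ X ∈ M.K, M.ρ (X.image (fun s => g • s)) = M.ρ X)
    (hfin : Set.Finite {O : Set (Finset S) | ∃ X ∈ M.K, O = orbSet G X})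
    (htrans : ∀ (s : S) (g : G), ({s, g • s} : Finset S) ∈ M.K → g • s = s)
    (d : ℕ) (hd : ∀ X ∈ M.K, M.ρ X ≤ d) (hd' : ∃ X ∈ M.K, M.ρ X = d)
    (ρ' : Finset (Quotient (MulAction.orbitRel G S)) → ℕ)
    (hρ' : ∀ X ∈ M.K, ρ' (X.image (Quotient.mk (MulAction.orbitRel G S))) = M.ρ X)
    (t : ℚ) (ht : t ≠ 0) :
    t ^ d * ∑ i ∈ Finset.range (d + 1),
        (numOrbits G M (fun X => M.ρ X = X.card ∧ X.card = i) : ℚ) *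
          ((1 - t) / t) ^ (d - i) =
    t ^ d * ∑ A : Finset (Quotient (MulAction.orbitRel G S)),
        (numOrbits G M
            (fun X => X.image (Quotient.mk (MulAction.orbitRel G S)) = A) : ℚ) *
          (1 / t - 1) ^ (d - ρ' A) * ((1 : ℚ) - 1) ^ (A.card - ρ' A) :=
  h_polynomial_eq_Tutte_evaluation_general M hρinv hfin htrans d hd ρ' hρ' t ht
end

section
/- Let 𝔖: G ↻ S be a refined G-semimatroid and let X ≤ Y in the poset Supp(I_𝔖) of supports of orbits of independent sets. Then δ_𝔖(X) divides δ_𝔖(Y). Consequently δ_𝔖 = lcm{δ_𝔖(B) : B a basis of the underlying quotient semimatroid}. -/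
/-!
The quotient map `G/stab(β) → G/stab(α)` carries `H^{(β)}` into `H^{(α)}`: a summand
`stab(β ∖ {s})` with `s ∈ α` lies in `stab(α ∖ {s})`, and one with `s ∉ α` lies in `stab(α)`,
which dies in `G/stab(α)`. So `G^{(β)}/H^{(β)}` surjects onto `G^{(α)}/H^{(α)}`; equivalently,
the preimages of `H^{(β)}` and `H^{(α)}` in `G` are nested, and indices divide. For the second
claim, an independent set extends to an independent set of full rank by the augmentation
axiom `cr2` and submodularity, exactly as for matroids.
-/

attribute [local instance] Classical.propDecidable

/-- The (pointwise, hence by translativity setwise) stabilizer of a central set. -/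
noncomputable def stabOf (G : Type*) {S : Type*} [AddGroup G] [AddAction G S]
    (τ : Finset S) : AddSubgroup G :=
  ⨅ s ∈ τ, AddAction.stabilizer G s

/-- `δ_𝔖(X)` for the support `X` of the independent set `τ`: the index of
`H^{(X)} = ⊕_{s ∈ τ} stab_{G^{(X)}}(X ∖ {s})` inside `G^{(X)} = G/stab(X)`. -/
noncomputable def deltaOf (G : Type*) {S : Type*} [AddCommGroup G] [AddAction G S]
    [DecidableEq S] (τ : Finset S) : ℕ :=
  AddSubgroup.index
    (⨆ s ∈ τ, (stabOf G (τ.erase s)).map (QuotientAddGroup.mk' (stabOf G τ)))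

theorem stabOf_anti {G S : Type*} [AddGroup G] [AddAction G S] {α β : Finset S}
    (h : α ⊆ β) : stabOf G β ≤ stabOf G α :=
  le_iInf₂ fun s hs => iInf₂_le s (h hs)

theorem deltaOf_eq_index {G S : Type*} [AddCommGroup G] [AddAction G S] [DecidableEq S]
    (τ : Finset S) :
    deltaOf G τ = ((⨆ s ∈ τ, stabOf G (τ.erase s)) ⊔ stabOf G τ).index := by
  rw [deltaOf, ← AddSubgroup.index_comap_of_surjective _ (QuotientAddGroup.mk'_surjective _)]
  simp only [← AddSubgroup.map_iSup, AddSubgroup.comap_map_eq, QuotientAddGroup.ker_mk']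

theorem iSup_stabOf_erase_sup_stabOf_anti {G S : Type*} [AddGroup G] [AddAction G S]
    [DecidableEq S] {α β : Finset S} (h : α ⊆ β) :
    (⨆ s ∈ β, stabOf G (β.erase s)) ⊔ stabOf G β ≤
      (⨆ s ∈ α, stabOf G (α.erase s)) ⊔ stabOf G α := by
  refine sup_le (iSup₂_le fun s hs => ?_) (le_sup_of_le_right (stabOf_anti h))
  by_cases hsα : s ∈ α
  · exact le_sup_of_le_left <| (stabOf_anti (Finset.erase_subset_erase s h)).trans <|
      le_iSup₂ (f := fun s (_ : s ∈ α) => stabOf G (α.erase s)) s hsα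
  · exact le_sup_of_le_right <| stabOf_anti fun t ht =>
      Finset.mem_erase.2 ⟨ne_of_mem_of_not_mem ht hsα, h ht⟩

theorem deltaOf_dvd_of_subset {G S : Type*} [AddCommGroup G] [AddAction G S] [DecidableEq S]
    {α β : Finset S} (h : α ⊆ β) : deltaOf G α ∣ deltaOf G β := by
  rw [deltaOf_eq_index, deltaOf_eq_index]
  exact AddSubgroup.index_dvd_of_le (iSup_stabOf_erase_sup_stabOf_anti h)

namespace Semimatroid

variable {S : Type*} [DecidableEq S] (M : Semimatroid S)

theorem rho_eq_of_forall_rho_insert_le {A Y : Finset S} (hY : Y ∈ M.K) (hA : A ⊆ Y)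
    (h : ∀ y ∈ Y, M.ρ (insert y A) ≤ M.ρ A) : M.ρ Y = M.ρ A := by
  have hunion : ∀ T ⊆ Y, M.ρ (A ∪ T) = M.ρ A := by
    intro T
    induction T using Finset.induction_on with
    | empty => simp
    | insert y T _ ih =>
      intro hT
      have hyY : y ∈ Y := hT (Finset.mem_insert_self y T)
      have hTY : T ⊆ Y := (Finset.subset_insert y T).trans hT
      have hAT : A ∪ T ∈ M.K := M.down hY (Finset.union_subset hA hTY)
      have hyA : insert y A ∈ M.K := M.down hY (Finset.insert_subset hyY hA)
      have hsplit : A ∪ insert y T = (A ∪ T) ∪ insert y A := by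
        ext; simp only [Finset.mem_union, Finset.mem_insert]; tauto
      have hunionK : (A ∪ T) ∪ insert y A ∈ M.K :=
        hsplit ▸ M.down hY (Finset.union_subset hA hT)
      have hsub := M.submodular hAT hyA hunionK
      have hinter : M.ρ A ≤ M.ρ ((A ∪ T) ∩ insert y A) :=
        M.mono (M.down hAT Finset.inter_subset_left)
          (Finset.subset_inter Finset.subset_union_left (Finset.subset_insert y A))
      have hge : M.ρ A ≤ M.ρ (A ∪ insert y T) :=
        M.mono (hsplit ▸ hunionK) Finset.subset_union_left
      rw [← hsplit, ih hTY] at hsub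
      have hy := h y hyY
      omega
  simpa [Finset.union_eq_right.2 hA] using hunion Y subset_rfl

theorem exists_insert_indep_of_rho_lt {A Y : Finset S} (hY : Y ∈ M.K) (hA : A ⊆ Y)
    (hind : M.ρ A = A.card) (hlt : M.ρ A < M.ρ Y) :
    ∃ y ∈ Y, y ∉ A ∧ M.ρ (insert y A) = (insert y A).card := by
  by_contra! hc
  refine hlt.ne' (M.rho_eq_of_forall_rho_insert_le hY hA fun y hy => ?_)
  by_cases hyA : y ∈ A
  · rw [Finset.insert_eq_self.2 hyA]
  · have hK : insert y A ∈ M.K := M.down hY (Finset.insert_subset hy hA)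
    have hle := M.rank_le_card _ hK
    have hne := hc y hy hyA
    rw [Finset.card_insert_of_notMem hyA] at hle hne
    omega

theorem exists_superset_rho_ge {A Z : Finset S} (hA : A ∈ M.K) (hZ : Z ∈ M.K) :
    ∃ W ∈ M.K, A ⊆ W ∧ M.ρ Z ≤ M.ρ W := by
  obtain ⟨W, ⟨hW, hAW⟩, hmin⟩ := (measure fun W : Finset S => (Z \ W).card).wf.has_min
    {W | W ∈ M.K ∧ A ⊆ W} ⟨A, hA, subset_rfl⟩
  refine ⟨W, hW, hAW, not_lt.1 fun hlt => ?_⟩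
  obtain ⟨y, hyZ, hyW, hins⟩ := M.cr2 hW hZ hlt
  refine hmin (insert y W) ⟨hins, hAW.trans (Finset.subset_insert y W)⟩ ?_
  show (Z \ insert y W).card < (Z \ W).card
  rw [Finset.sdiff_insert]
  exact Finset.card_erase_lt_of_mem (Finset.mem_sdiff.2 ⟨hyZ, hyW⟩)

theorem exists_indep_superset_rho_eq {A W : Finset S} (hW : W ∈ M.K) (hAW : A ⊆ W)
    (hind : M.ρ A = A.card) :
    ∃ B ⊆ W, A ⊆ B ∧ M.ρ B = B.card ∧ M.ρ B = M.ρ W := by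
  obtain ⟨B, ⟨hBW, hAB, hBind⟩, hmin⟩ := (measure fun B : Finset S => (W \ B).card).wf.has_min
    {B | B ⊆ W ∧ A ⊆ B ∧ M.ρ B = B.card} ⟨A, hAW, subset_rfl, hind⟩
  refine ⟨B, hBW, hAB, hBind, le_antisymm (M.mono hW hBW) (not_lt.1 fun hlt => ?_)⟩
  obtain ⟨y, hyW, hyB, hins⟩ := M.exists_insert_indep_of_rho_lt hW hBW hBind hlt
  refine hmin (insert y B)
    ⟨Finset.insert_subset hyW hBW, hAB.trans (Finset.subset_insert y B), hins⟩ ?_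
  show (W \ insert y B).card < (W \ B).card
  rw [Finset.sdiff_insert]
  exact Finset.card_erase_lt_of_mem (Finset.mem_sdiff.2 ⟨hyW, hyB⟩)

theorem exists_basis_superset {d : ℕ} (hd : ∀ X ∈ M.K, M.ρ X ≤ d)
    (hd' : ∃ X ∈ M.K, M.ρ X = d) {A : Finset S} (hA : A ∈ M.K) (hind : M.ρ A = A.card) :
    ∃ B ∈ M.K, M.ρ B = B.card ∧ A ⊆ B ∧ M.ρ B = d := by
  obtain ⟨Z, hZ, rfl⟩ := hd'
  obtain ⟨W, hW, hAW, hZW⟩ := M.exists_superset_rho_ge hA hZ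
  obtain ⟨B, hBW, hAB, hBind, hBW'⟩ := M.exists_indep_superset_rho_eq hW hAW hind
  exact ⟨B, M.down hW hBW, hBind, hAB, le_antisymm (hd B (M.down hW hBW)) (hBW' ▸ hZW)⟩

end Semimatroid

theorem delta_divides_of_le_general
    {S G : Type*} [DecidableEq S]
    [AddCommGroup G] [AddAction G S]
    (M : Semimatroid S)
    (d : ℕ) (hd : ∀ X ∈ M.K, M.ρ X ≤ d) (hd' : ∃ X ∈ M.K, M.ρ X = d)
    (α β : Finset S) (hβ : β ∈ M.K) (hαβ : α ⊆ β)
    (hαind : M.ρ α = α.card) :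
    deltaOf G α ∣ deltaOf G β ∧
    ∃ β' : Finset S, β' ∈ M.K ∧ M.ρ β' = β'.card ∧ α ⊆ β' ∧ M.ρ β' = d ∧
      deltaOf G α ∣ deltaOf G β' := by
  obtain ⟨β', hβ'K, hβ'ind, hαβ', hβ'd⟩ := M.exists_basis_superset hd hd' (M.down hβ hαβ) hαind
  exact ⟨deltaOf_dvd_of_subset hαβ, β', hβ'K, hβ'ind, hαβ', hβ'd, deltaOf_dvd_of_subset hαβ'⟩

/-- Let `𝔖 : G ↻ S` be a refined `G`-semimatroid and let `X ≤ Y`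
in the poset `Supp(I_𝔖)` of supports of orbits of independent sets (represented by
nested independent central sets `α ⊆ β`).  Then `δ_𝔖(X)` divides `δ_𝔖(Y)`.
Consequently `δ_𝔖` is the lcm of the `δ_𝔖(B)` over the bases `B` of the underlying
quotient semimatroid: every independent `α` extends to a basis `β'` with
`δ_𝔖(supp α) ∣ δ_𝔖(supp β')`. -/
theorem delta_divides_of_le
    {S G : Type*} [DecidableEq S]
    [AddCommGroup G] [Module.Free ℤ G] [Module.Finite ℤ G] [AddAction G S]
    (M : Semimatroid S)
    (hK : ∀ (g : G), ∀ X ∈ M.K, X.image (fun s => g +ᵥ s) ∈ M.K)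
    (hρinv : ∀ (g : G), ∀ X ∈ M.K, M.ρ (X.image (fun s => g +ᵥ s)) = M.ρ X)
    (hfin : Set.Finite {O : Set (Finset S) |
        ∃ X ∈ M.K, O = {Y : Finset S | ∃ g : G, Y = X.image (fun s => g +ᵥ s)}})
    (htrans : ∀ (s : S) (g : G), ({s, g +ᵥ s} : Finset S) ∈ M.K → g +ᵥ s = s)
    (d k : ℕ) (hd : ∀ X ∈ M.K, M.ρ X ≤ d) (hd' : ∃ X ∈ M.K, M.ρ X = d)
    (href : ∀ X ∈ M.K,
        (∃ C : AddSubgroup G, IsCompl (stabOf G X) C) ∧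
          Module.finrank ℤ (stabOf G X) = k * (d - M.ρ X))
    (α β : Finset S) (hβ : β ∈ M.K) (hαβ : α ⊆ β)
    (hαind : M.ρ α = α.card) (hβind : M.ρ β = β.card) :
    deltaOf G α ∣ deltaOf G β ∧
    ∃ β' : Finset S, β' ∈ M.K ∧ M.ρ β' = β'.card ∧ α ⊆ β' ∧ M.ρ β' = d ∧
      deltaOf G α ∣ deltaOf G β' :=
  delta_divides_of_le_general M d hd hd' α β hβ hαβ hαind
end
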